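/- arXiv:1706.05441 — 8 statements merged into one kernel-verified Lean document; each statement's English description precedes it below -/
import Mathlib

section
/- Let x* ∈ ℝ^{n×p} have every row x*_i ∈ Ω_i. Then x* is an optimal solution of the resource allocation problem min_{x∈ℝ^{n×p}} Σ_{i=1}^n f_i(x_i) subject to Σ_{i=1}^n (x_i − r_i) = 0 and x_i ∈ Ω_i for all i, if and only if there exist a matrix q* ∈ ℝ^{(n−1)×p} and a matrix D ∈ ℝ^{n×p} whose i-th row d_i satisfies f_i(y) ≥ f_i(x*_i) + ⟨d_i, y − x*_i⟩ for all y ∈ Ω_i (i.e., d_i is a subgradient of f_i + ι_{Ω_i} at x*_i), such that x* − r + c Uᵀ q* = 0 and U D = 0. -/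
/-!
Sufficiency: `U D = 0` and `ker U = ℝ𝟙` force all rows of `D` to equal one vector `d`, so summing
the subgradient inequalities at any feasible `x` leaves `⟨d, Σᵢ (xᵢ - x*ᵢ)⟩ = 0`.

Necessity is Lagrange duality for the coupling constraint. The pairs `(Σᵢ (xᵢ - rᵢ) + q, t)` with
`x ∈ Π Ω`, `t ≥ Σᵢ fᵢ(xᵢ)` and `q` in a complement `Q` of the span of the residuals form a convex
set `G`. By the Slater condition every residual direction can be followed a little both ways, so
`0` is an interior point of `residuals + Q` (a convex absorbing set in finite dimension), and a
simplex around it lifts into `G`; hence `G` has interior points above `0`. Separating `(0, f*)`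
from the interior of `G` gives a non-vertical supporting hyperplane, i.e. `d` with
`f* + ⟨d, u⟩ ≤ t` on `G`; replacing a single block `x*ᵢ` by `y ∈ Ωᵢ` yields the subgradient
inequalities. Finally `x* - r` has zero column sums, and those are exactly the matrices in the
range of `Uᵀ` because that range is the annihilator of `ker U = ℝ𝟙`.
-/

open Set Filter Topology Pointwise Matrix

section ConvexAnalysis

variable {E : Type*} [NormedAddCommGroup E] [NormedSpace ℝ E]

theorem Convex.mem_nhds_zero_of_absorbent [FiniteDimensional ℝ E] {s : Set E}
    (hs : Convex ℝ s) (habs : Absorbent ℝ s) : s ∈ 𝓝 0 := by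
  have hgauge : ConvexOn ℝ univ (gauge s) := by
    refine ⟨convex_univ, fun x _ y _ a b ha hb _ => ?_⟩
    simpa only [gauge_smul_of_nonneg ha, gauge_smul_of_nonneg hb] using
      gauge_add_le hs habs (a • x) (b • y)
  have hopen : IsOpen {x | gauge s x < 1} :=
    isOpen_lt (continuousOn_univ.mp (hgauge.continuousOn isOpen_univ)) continuous_const
  exact mem_of_superset (hopen.mem_nhds (by simp [gauge_zero]))
    (setOfPred_gauge_lt_one_subset_self hs habs.zero_mem habs)

theorem Convex.eventually_smul_mem_of_mem_span {S : Set E} (hS : Convex ℝ S) (h0 : (0 : E) ∈ S)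
    (hrad : ∀ u ∈ S, ∀ᶠ c : ℝ in 𝓝 0, c • u ∈ S) {w : E} (hw : w ∈ Submodule.span ℝ S) :
    ∀ᶠ c : ℝ in 𝓝 0, c • w ∈ S := by
  have hscale (a : ℝ) {u : E} (hu : ∀ᶠ c : ℝ in 𝓝 0, c • u ∈ S) :
      ∀ᶠ c : ℝ in 𝓝 0, (c * a) • u ∈ S :=
    (continuous_id.mul continuous_const).tendsto' 0 0 (zero_mul a) |>.eventually hu
  induction hw using Submodule.span_induction with
  | mem u hu => exact hrad u hu
  | zero => exact .of_forall fun c => by simpa using h0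
  | add x y _ _ hx hy =>
    filter_upwards [hscale 2 hx, hscale 2 hy] with c hcx hcy
    convert hS hcx hcy (by norm_num : (0 : ℝ) ≤ 1 / 2) (by norm_num : (0 : ℝ) ≤ 1 / 2)
      (by norm_num) using 1
    module
  | smul a x _ hx =>
    filter_upwards [hscale a hx] with c hc
    rwa [smul_smul]

theorem Convex.add_mem_nhds_zero_of_isCompl [FiniteDimensional ℝ E] {S : Set E}
    (hS : Convex ℝ S) (h0 : (0 : E) ∈ S) (hrad : ∀ u ∈ S, ∀ᶠ c : ℝ in 𝓝 0, c • u ∈ S)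
    {Q : Submodule ℝ E} (hQ : IsCompl (Submodule.span ℝ S) Q) : S + (Q : Set E) ∈ 𝓝 0 := by
  have h0' : (0 : E) ∈ S + (Q : Set E) := ⟨0, h0, 0, Q.zero_mem, add_zero 0⟩
  refine (hS.add Q.convex).mem_nhds_zero_of_absorbent fun u => ?_
  rw [absorbs_iff_eventually_nhds_zero h0']
  obtain ⟨w, hw, q, hq, rfl⟩ :=
    Submodule.mem_sup.mp (hQ.sup_eq_top ▸ Submodule.mem_top (x := u))
  filter_upwards [hS.eventually_smul_mem_of_mem_span h0 hrad hw] with c hc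
  simpa [smul_add] using add_mem_add hc (Q.smul_mem c hq)

theorem eventually_lineMap_mem_of_mem_intrinsicInterior {s : Set E} {a y : E}
    (ha : a ∈ intrinsicInterior ℝ s) (hy : y ∈ s) :
    ∀ᶠ c : ℝ in 𝓝 0, AffineMap.lineMap a y c ∈ s := by
  obtain ⟨b, hb, rfl⟩ := ha
  let γ : ℝ → affineSpan ℝ s := fun c =>
    ⟨AffineMap.lineMap (b : E) y c, AffineMap.lineMap_mem c b.2 (subset_affineSpan ℝ s hy)⟩
  have hγ : Continuous γ := AffineMap.lineMap_continuous.subtype_mk _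
  have hγ0 : γ 0 = b := Subtype.ext (AffineMap.lineMap_apply_zero _ _)
  have := hγ.continuousAt.preimage_mem_nhds (hγ0 ▸ isOpen_interior.mem_nhds hb)
  exact Filter.mem_of_superset this fun c hc => interior_subset (s := Subtype.val ⁻¹' s) hc

theorem Convex.exists_mem_interior_of_fst_mem_nhds [FiniteDimensional ℝ E] {G : Set (E × ℝ)}
    (hG : Convex ℝ G) (hup : ∀ u t t', (u, t) ∈ G → t ≤ t' → (u, t') ∈ G) {a : E}
    (ha : Prod.fst '' G ∈ 𝓝 a) : ∃ t, (a, t) ∈ interior G := by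
  obtain ⟨b, hab, hbG⟩ := exists_mem_interior_convexHull_affineBasis ha
  choose p hpG hpb using fun i => hbG (subset_convexHull ℝ _ (mem_range_self i))
  obtain ⟨M, hM⟩ := (finite_range fun i => (p i).2).bddAbove
  have hlevel : Convex ℝ {u | (u, M) ∈ G} := fun x hx y hy α β hα hβ hαβ => by
    simpa [← add_mul, hαβ] using hG hx hy hα hβ hαβ
  have hhull : convexHull ℝ (range b) ⊆ {u | (u, M) ∈ G} := by
    refine convexHull_min (range_subset_iff.mpr fun i => ?_) hlevel
    exact hup _ _ _ (hpb i ▸ hpG i) (hM (mem_range_self i))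
  refine ⟨M + 1, interior_maximal (t := interior (convexHull ℝ (range b)) ×ˢ Ioi M) ?_
    (isOpen_interior.prod isOpen_Ioi) ⟨hab, lt_add_one M⟩⟩
  rintro ⟨u, t⟩ ⟨hu, ht⟩
  exact hup _ _ _ (hhull (interior_subset hu)) (le_of_lt ht)

theorem Convex.exists_affine_minorant_of_fst_mem_nhds [FiniteDimensional ℝ E] {G : Set (E × ℝ)}
    (hG : Convex ℝ G) (hup : ∀ u t t', (u, t) ∈ G → t ≤ t' → (u, t') ∈ G) {a : E} {v : ℝ}
    (ha : Prod.fst '' G ∈ 𝓝 a) (hv : ∀ t, (a, t) ∈ G → v ≤ t) :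
    ∃ ℓ : StrongDual ℝ E, ∀ p ∈ G, v + ℓ (p.1 - a) ≤ p.2 := by
  obtain ⟨s, hs⟩ := hG.exists_mem_interior_of_fst_mem_nhds hup ha
  have hbelow : (a, v) ∉ interior G := by
    intro h
    have hcurve : Tendsto (fun ε : ℝ => (a, v - ε)) (𝓝[>] 0) (𝓝 (a, v)) :=
      tendsto_nhdsWithin_of_tendsto_nhds (Continuous.tendsto' (by fun_prop) _ _ (by simp))
    obtain ⟨ε, hεG, hε⟩ :=
      ((hcurve.eventually (mem_interior_iff_mem_nhds.mp h)).and self_mem_nhdsWithin).exists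
    linarith [hv _ hεG, show (0 : ℝ) < ε from hε]
  obtain ⟨φ, hφ⟩ := geometric_hahn_banach_open_point hG.interior isOpen_interior hbelow
  have hφG : ∀ p ∈ G, φ p ≤ φ (a, v) := by
    have : closure G ⊆ {p | φ p ≤ φ (a, v)} := by
      rw [← hG.closure_interior_eq_closure_of_nonempty_interior ⟨_, hs⟩]
      exact closure_minimal (fun p hp => (hφ p hp).le) (isClosed_le φ.continuous continuous_const)
    exact fun p hp => this (subset_closure hp)
  have hsplit (u : E) (t : ℝ) : φ (u, t) = φ (u, 0) + t * φ (0, 1) := by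
    rw [← smul_eq_mul, ← map_smul, ← map_add, Prod.smul_mk, Prod.mk_add_mk]
    simp
  have hμ : φ (0, 1) < 0 := by
    have h1 := hφ _ hs
    have h2 := hv s (interior_subset hs)
    rw [hsplit a s, hsplit a v] at h1
    nlinarith
  refine ⟨(-φ (0, 1))⁻¹ • φ.comp (ContinuousLinearMap.inl ℝ E ℝ), fun p hp => ?_⟩
  have h1 := hφG p hp
  rw [hsplit p.1 p.2, hsplit a v] at h1
  simp only [FunLike.coe_smul, Pi.smul_apply, ContinuousLinearMap.comp_apply,
    ContinuousLinearMap.inl_apply, smul_eq_mul]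
  rw [show ((p.1 - a, 0) : E × ℝ) = (p.1, 0) - (a, 0) by simp, map_sub, inv_mul_eq_div,
    ← le_sub_iff_add_le', div_le_iff₀ (neg_pos.mpr hμ)]
  linarith

end ConvexAnalysis

namespace Matrix
variable {K ι κ m : Type*} [Field K] [Fintype ι]

theorem exists_vecMul_eq_of_dotProduct_eq_zero [Fintype κ] [DecidableEq ι] [DecidableEq κ]
    (A : Matrix κ ι K) {v : ι → K} (hv : ∀ x, A *ᵥ x = 0 → v ⬝ᵥ x = 0) : ∃ w, w ᵥ* A = v := by
  obtain ⟨ψ, hψ⟩ : dotProductEquiv K ι v ∈ LinearMap.range A.mulVecLin.dualMap := by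
    rw [LinearMap.range_dualMap_eq_dualAnnihilator_ker, Submodule.mem_dualAnnihilator]
    exact hv
  refine ⟨(dotProductEquiv K κ).symm ψ,
    (dotProductEquiv K ι).injective (LinearMap.ext fun x => ?_)⟩
  rw [← hψ, dotProductEquiv_apply_apply, ← dotProduct_mulVec]
  exact LinearMap.congr_fun ((dotProductEquiv K κ).apply_symm_apply ψ) (A *ᵥ x)

variable {U : Matrix κ ι K}

theorem mul_eq_zero_iff_exists_rows_eq (hU : ∀ v : ι → K, U *ᵥ v = 0 ↔ ∃ a : K, v = fun _ => a)
    {D : Matrix ι m K} : U * D = 0 ↔ ∃ d, ∀ i, D i = d := by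
  have hcol (k : κ) (j : m) : (U * D) k j = (U *ᵥ fun i => D i j) k := rfl
  constructor
  · intro hUD
    choose d hd using fun j => (hU fun i => D i j).mp (funext fun k => by rw [← hcol, hUD]; rfl)
    exact ⟨d, fun i => funext fun j => congrFun (hd j) i⟩
  · rintro ⟨d, hd⟩
    ext k j
    rw [hcol, (hU _).mpr ⟨d j, funext fun i => by rw [hd]⟩]
    rfl

theorem exists_transpose_mul_eq_iff [Fintype κ] [DecidableEq ι] [DecidableEq κ]
    (hU : ∀ v : ι → K, U *ᵥ v = 0 ↔ ∃ a : K, v = fun _ => a) {M : Matrix ι m K} :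
    (∃ q : Matrix κ m K, Uᵀ * q = M) ↔ ∀ j, ∑ i, M i j = 0 := by
  have hrow (k : κ) : ∑ i, U k i = 0 := by
    simpa [mulVec, dotProduct] using congrFun ((hU fun _ => 1).mpr ⟨1, rfl⟩) k
  constructor
  · rintro ⟨q, rfl⟩ j
    simp only [mul_apply, transpose_apply]
    rw [Finset.sum_comm]
    simp [← Finset.sum_mul, hrow]
  · intro hM
    have hcol (j : m) : ∃ w, w ᵥ* U = fun i => M i j := by
      refine U.exists_vecMul_eq_of_dotProduct_eq_zero fun x hx => ?_
      obtain ⟨a, rfl⟩ := (hU x).mp hx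
      simp [dotProduct, ← Finset.sum_mul, hM j]
    choose w hw using hcol
    refine ⟨of fun k j => w j k, ext fun i j => ?_⟩
    simp [mul_apply, ← congrFun (hw j) i, vecMul, dotProduct, mul_comm]

theorem exists_sub_add_smul_transpose_mul_eq_zero_iff [Fintype κ] [DecidableEq ι]
    [DecidableEq κ] (hU : ∀ v : ι → K, U *ᵥ v = 0 ↔ ∃ a : K, v = fun _ => a) {c : K}
    (hc : c ≠ 0) {x r : Matrix ι m K} :
    (∃ q : Matrix κ m K, x - r + c • (Uᵀ * q) = 0) ↔ ∑ i, (x i - r i) = 0 := by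
  have hsum : ∑ i, (x i - r i) = 0 ↔ ∀ j, ∑ i, (x i j - r i j) = 0 :=
    funext_iff.trans (forall_congr' fun j => by rw [Finset.sum_apply]; rfl)
  simp_rw [hsum, add_eq_zero_iff_eq_neg', ← eq_inv_smul_iff₀ hc, exists_transpose_mul_eq_iff hU]
  simp only [neg_sub, smul_apply, sub_apply, smul_eq_mul, ← Finset.mul_sum, Finset.sum_sub_distrib,
    mul_eq_zero, inv_eq_zero, hc, sub_eq_zero, false_or]
  exact forall_congr' fun j => eq_comm

end Matrix

theorem Fintype.sum_apply_update {ι α M : Type*} [Fintype ι] [DecidableEq ι] [AddCommGroup M]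
    (g : ι → α → M) (x : ι → α) (i : ι) (y : α) :
    ∑ j, g j (Function.update x i y j) = ∑ j, g j (x j) - g i (x i) + g i y := by
  rw [← Finset.add_sum_erase _ _ (Finset.mem_univ i),
    ← Finset.add_sum_erase _ _ (Finset.mem_univ i)]
  rw [Finset.sum_congr rfl fun j hj => by rw [Function.update_of_ne (Finset.ne_of_mem_erase hj)]]
  simp only [Function.update_self]
  abel

namespace ResourceAllocation

variable {ι E : Type*} [Fintype ι] [NormedAddCommGroup E] [NormedSpace ℝ E]

theorem sum_smul_add_smul_sub (r x y : ι → E) {α β : ℝ} (hαβ : α + β = 1) :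
    ∑ i, (α • x i + β • y i - r i) = α • ∑ i, (x i - r i) + β • ∑ i, (y i - r i) := by
  simp only [Finset.smul_sum, ← Finset.sum_add_distrib]
  refine Finset.sum_congr rfl fun i _ => ?_
  linear_combination (norm := module) hαβ • r i

def residuals (Ω : ι → Set E) (r : ι → E) : Set E :=
  {u | ∃ x : ι → E, (∀ i, x i ∈ Ω i) ∧ ∑ i, (x i - r i) = u}

def epigraph (f : ι → E → ℝ) (Ω : ι → Set E) (r : ι → E) (Q : Set E) : Set (E × ℝ) :=
  {p | ∃ x : ι → E, (∀ i, x i ∈ Ω i) ∧ ∃ q ∈ Q, p.1 = ∑ i, (x i - r i) + q ∧ ∑ i, f i (x i) ≤ p.2}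

variable {f : ι → E → ℝ} {Ω : ι → Set E} {r : ι → E}

theorem convex_residuals (hΩ : ∀ i, Convex ℝ (Ω i)) : Convex ℝ (residuals Ω r) := by
  rintro _ ⟨x₁, hx₁, rfl⟩ _ ⟨x₂, hx₂, rfl⟩ α β hα hβ hαβ
  exact ⟨fun i => α • x₁ i + β • x₂ i, fun i => hΩ i (hx₁ i) (hx₂ i) hα hβ hαβ,
    sum_smul_add_smul_sub r x₁ x₂ hαβ⟩

theorem eventually_smul_mem_residuals {xt : ι → E} (hxt : ∑ i, (xt i - r i) = 0)
    (hxt' : ∀ i, xt i ∈ intrinsicInterior ℝ (Ω i)) :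
    ∀ u ∈ residuals Ω r, ∀ᶠ c : ℝ in 𝓝 0, c • u ∈ residuals Ω r := by
  rintro _ ⟨x, hx, rfl⟩
  filter_upwards [eventually_all.mpr fun i =>
    eventually_lineMap_mem_of_mem_intrinsicInterior (hxt' i) (hx i)] with c hc
  refine ⟨fun i => AffineMap.lineMap (xt i) (x i) c, hc, ?_⟩
  simp only [AffineMap.lineMap_apply_module]
  rw [sum_smul_add_smul_sub r xt x (sub_add_cancel 1 c), hxt, smul_zero, zero_add]

theorem convex_epigraph (hf : ∀ i, ConvexOn ℝ (Ω i) (f i)) {Q : Set E} (hQ : Convex ℝ Q) :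
    Convex ℝ (epigraph f Ω r Q) := by
  rintro ⟨u₁, t₁⟩ ⟨x₁, hx₁, q₁, hq₁, hu₁, ht₁⟩ ⟨u₂, t₂⟩ ⟨x₂, hx₂, q₂, hq₂, hu₂, ht₂⟩ α β hα hβ hαβ
  dsimp only at hu₁ hu₂ ht₁ ht₂
  subst hu₁ hu₂
  refine ⟨fun i => α • x₁ i + β • x₂ i, fun i => (hf i).1 (hx₁ i) (hx₂ i) hα hβ hαβ,
    α • q₁ + β • q₂, hQ hq₁ hq₂ hα hβ hαβ, ?_, ?_⟩
  · simp only [Prod.smul_mk, Prod.mk_add_mk, sum_smul_add_smul_sub r x₁ x₂ hαβ]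
    module
  · calc ∑ i, f i (α • x₁ i + β • x₂ i)
        ≤ ∑ i, (α * f i (x₁ i) + β * f i (x₂ i)) :=
          Finset.sum_le_sum fun i _ => (hf i).2 (hx₁ i) (hx₂ i) hα hβ hαβ
      _ = α * ∑ i, f i (x₁ i) + β * ∑ i, f i (x₂ i) := by
          rw [Finset.sum_add_distrib, Finset.mul_sum, Finset.mul_sum]
      _ ≤ α * t₁ + β * t₂ := by gcongr

theorem exists_common_subgradient_of_optimal [FiniteDimensional ℝ E]
    (hf : ∀ i, ConvexOn ℝ (Ω i) (f i)) {xt xs : ι → E} (hxt : ∑ i, (xt i - r i) = 0)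
    (hxt' : ∀ i, xt i ∈ intrinsicInterior ℝ (Ω i)) (hxs : ∀ i, xs i ∈ Ω i)
    (hfeas : ∑ i, (xs i - r i) = 0)
    (hopt : ∀ x : ι → E, ∑ i, (x i - r i) = 0 → (∀ i, x i ∈ Ω i) →
      ∑ i, f i (xs i) ≤ ∑ i, f i (x i)) :
    ∃ ℓ : StrongDual ℝ E, ∀ i, ∀ y ∈ Ω i, f i (xs i) + ℓ (y - xs i) ≤ f i y := by
  classical
  obtain ⟨Q, hQ⟩ := (Submodule.span ℝ (residuals Ω r)).exists_isCompl
  have hnhds : Prod.fst '' epigraph f Ω r Q ∈ 𝓝 0 := by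
    refine mem_of_superset ((convex_residuals fun i => (hf i).1).add_mem_nhds_zero_of_isCompl
      ⟨xt, fun i => intrinsicInterior_subset (hxt' i), hxt⟩
      (eventually_smul_mem_residuals hxt hxt') hQ) ?_
    rintro _ ⟨_, ⟨x, hx, rfl⟩, q, hq, rfl⟩
    exact ⟨(_, ∑ i, f i (x i)), ⟨x, hx, q, hq, rfl, le_rfl⟩, rfl⟩
  have hfiber : ∀ t, ((0 : E), t) ∈ epigraph f Ω r Q → ∑ i, f i (xs i) ≤ t := by
    rintro t ⟨x, hx, q, hq, h0, ht⟩
    have hres : ∑ i, (x i - r i) = 0 := by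
      refine Submodule.disjoint_def.mp hQ.disjoint _ (Submodule.subset_span ⟨x, hx, rfl⟩) ?_
      rw [eq_neg_of_add_eq_zero_left h0.symm]
      exact Q.neg_mem hq
    exact (hopt x hres hx).trans ht
  obtain ⟨ℓ, hℓ⟩ := (convex_epigraph hf Q.convex).exists_affine_minorant_of_fst_mem_nhds
    (fun u t t' ⟨x, hx, q, hq, hu, ht⟩ htt' => ⟨x, hx, q, hq, hu, ht.trans htt'⟩) hnhds hfiber
  refine ⟨ℓ, fun i y hy => ?_⟩
  have hupdate : ∀ j, Function.update xs i y j ∈ Ω j :=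
    Function.forall_update_iff xs (p := fun j z => z ∈ Ω j) |>.mpr ⟨hy, fun j _ => hxs j⟩
  have hres : ∑ j, (Function.update xs i y j - r j) = y - xs i := by
    rw [Fintype.sum_apply_update (fun j z => z - r j), hfeas]
    abel
  have hmem : (y - xs i, ∑ j, f j (xs j) - f i (xs i) + f i y) ∈ epigraph f Ω r Q :=
    ⟨_, hupdate, 0, Q.zero_mem, by rw [add_zero, hres], (Fintype.sum_apply_update f xs i y).le⟩
  have := hℓ _ hmem
  rw [sub_zero] at this
  linarith

theorem sum_le_sum_of_common_subgradient (ℓ : E →ₗ[ℝ] ℝ) {xs x : ι → E}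
    (hℓ : ∀ i, ∀ y ∈ Ω i, f i (xs i) + ℓ (y - xs i) ≤ f i y) (hx : ∀ i, x i ∈ Ω i)
    (hres : ∑ i, (x i - r i) = ∑ i, (xs i - r i)) : ∑ i, f i (xs i) ≤ ∑ i, f i (x i) := by
  have hzero : ∑ i, ℓ (x i - xs i) = 0 := by
    have hdiff : ∑ i, (x i - xs i) = ∑ i, (x i - r i) - ∑ i, (xs i - r i) := by
      rw [← Finset.sum_sub_distrib]
      simp
    rw [← map_sum, hdiff, hres, sub_self, map_zero]
  calc ∑ i, f i (xs i) = ∑ i, (f i (xs i) + ℓ (x i - xs i)) := by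
        rw [Finset.sum_add_distrib, hzero, add_zero]
    _ ≤ ∑ i, f i (x i) := Finset.sum_le_sum fun i _ => hℓ i (x i) (hx i)

end ResourceAllocation

theorem stmt_0_general (n p : ℕ)
    (c : ℝ) (hc : c ≠ 0)
    (U : Matrix (Fin (n - 1)) (Fin n) ℝ)
    -- `U` has null space `{a𝟙 : a ∈ ℝ}` (hence, by rank-nullity, full row rank)
    (hU : ∀ v : Fin n → ℝ, U.mulVec v = 0 ↔ ∃ a : ℝ, v = fun _ => a)
    (f : Fin n → (Fin p → ℝ) → ℝ)
    (hf : ∀ i, ConvexOn ℝ Set.univ (f i))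
    (Ω : Fin n → Set (Fin p → ℝ))
    (hΩcv : ∀ i, Convex ℝ (Ω i))
    (r : Matrix (Fin n) (Fin p) ℝ)
    -- Slater condition
    (slater : ∃ xt : Matrix (Fin n) (Fin p) ℝ,
      (∑ i, (xt i - r i)) = 0 ∧ ∀ i, xt i ∈ intrinsicInterior ℝ (Ω i))
    (xs : Matrix (Fin n) (Fin p) ℝ)
    (hxs : ∀ i, xs i ∈ Ω i) :
    -- `xs` is an optimal solution of the resource allocation problem
    ((∑ i, (xs i - r i)) = 0 ∧
      ∀ x : Matrix (Fin n) (Fin p) ℝ,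
        (∑ i, (x i - r i)) = 0 → (∀ i, x i ∈ Ω i) →
          ∑ i, f i (xs i) ≤ ∑ i, f i (x i))
    ↔
    (∃ (q : Matrix (Fin (n - 1)) (Fin p) ℝ) (D : Matrix (Fin n) (Fin p) ℝ),
      (∀ i, ∀ y ∈ Ω i, f i (xs i) + (D i) ⬝ᵥ (y - xs i) ≤ f i y) ∧
      xs - r + c • (Uᵀ * q) = 0 ∧
      U * D = 0) := by
  have hfΩ i : ConvexOn ℝ (Ω i) (f i) := (hf i).subset (subset_univ _) (hΩcv i)
  constructor
  · rintro ⟨hfeas, hopt⟩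
    obtain ⟨xt, hxt, hxt'⟩ := slater
    obtain ⟨ℓ, hℓ⟩ := ResourceAllocation.exists_common_subgradient_of_optimal hfΩ hxt hxt' hxs hfeas
      hopt
    obtain ⟨q, hq⟩ := (exists_sub_add_smul_transpose_mul_eq_zero_iff hU hc).mpr hfeas
    set d := (dotProductEquiv ℝ (Fin p)).symm ℓ.toLinearMap
    have hd (v : Fin p → ℝ) : d ⬝ᵥ v = ℓ v :=
      LinearMap.congr_fun ((dotProductEquiv ℝ (Fin p)).apply_symm_apply _) v
    exact ⟨q, of fun _ => d, fun i y hy => (hd _).symm ▸ hℓ i y hy, hq,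
      (mul_eq_zero_iff_exists_rows_eq hU).mpr ⟨d, fun _ => rfl⟩⟩
  · rintro ⟨q, D, hD, hq, hUD⟩
    obtain ⟨d, hd⟩ := (mul_eq_zero_iff_exists_rows_eq hU).mp hUD
    have hfeas := (exists_sub_add_smul_transpose_mul_eq_zero_iff hU hc).mp ⟨q, hq⟩
    exact ⟨hfeas, fun x hx hxΩ => ResourceAllocation.sum_le_sum_of_common_subgradient
      (dotProductEquiv ℝ (Fin p) d) (fun i y hy => by simpa [hd] using hD i y hy) hxΩ
      (hx.trans hfeas.symm)⟩

/-- First-order optimality conditions for the distributed resource allocation problem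
`min Σᵢ fᵢ(xᵢ) s.t. Σᵢ (xᵢ - rᵢ) = 0, xᵢ ∈ Ωᵢ` (Lemma 1). -/
theorem stmt_0 (n p : ℕ) (hn : 2 ≤ n) (hp : 1 ≤ p)
    (c : ℝ) (hc : c ≠ 0)
    (U : Matrix (Fin (n - 1)) (Fin n) ℝ)
    -- `U` has null space `{a𝟙 : a ∈ ℝ}` (hence, by rank-nullity, full row rank)
    (hU : ∀ v : Fin n → ℝ, U.mulVec v = 0 ↔ ∃ a : ℝ, v = fun _ => a)
    (f : Fin n → (Fin p → ℝ) → ℝ)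
    (hf : ∀ i, ConvexOn ℝ Set.univ (f i))
    (Ω : Fin n → Set (Fin p → ℝ))
    (hΩne : ∀ i, (Ω i).Nonempty)
    (hΩcl : ∀ i, IsClosed (Ω i))
    (hΩcv : ∀ i, Convex ℝ (Ω i))
    (r : Matrix (Fin n) (Fin p) ℝ)
    -- Slater condition
    (slater : ∃ xt : Matrix (Fin n) (Fin p) ℝ,
      (∑ i, (xt i - r i)) = 0 ∧ ∀ i, xt i ∈ intrinsicInterior ℝ (Ω i))
    (xs : Matrix (Fin n) (Fin p) ℝ)
    (hxs : ∀ i, xs i ∈ Ω i) :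
    -- `xs` is an optimal solution of the resource allocation problem
    ((∑ i, (xs i - r i)) = 0 ∧
      ∀ x : Matrix (Fin n) (Fin p) ℝ,
        (∑ i, (x i - r i)) = 0 → (∀ i, x i ∈ Ω i) →
          ∑ i, f i (xs i) ≤ ∑ i, f i (x i))
    ↔
    (∃ (q : Matrix (Fin (n - 1)) (Fin p) ℝ) (D : Matrix (Fin n) (Fin p) ℝ),
      (∀ i, ∀ y ∈ Ω i, f i (xs i) + (D i) ⬝ᵥ (y - xs i) ≤ f i y) ∧
      xs - r + c • (Uᵀ * q) = 0 ∧
      U * D = 0) :=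
  stmt_0_general n p c hc U hU f hf Ω hΩcv r slater xs hxs
end

section
/- A point x* ∈ ℝ^{n×p} is an optimal solution of the consensus optimization problem min_{x∈ℝ^{n×p}} Σ_{i=1}^n h_i(x_i) subject to x_1 = x_2 = ⋯ = x_n, if and only if there exist a matrix q* ∈ ℝ^{(n−1)×p} and a matrix D ∈ ℝ^{n×p} whose i-th row is a subgradient of h_i at x*_i, such that D + c Uᵀ q* = 0 and U x* = 0. -/
/-!
On the consensus subspace `V = ker (U * ·)` the problem is a linearly constrained convex program.
Separating the strict epigraph of `F x = ∑ᵢ hᵢ(xᵢ)` from `V × {F xs}` gives a subgradient of `F` at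
`xs` that vanishes on `V`. A linear functional vanishing on `ker (U * ·)` factors through `U * ·`,
so it is `y ↦ tr (Uᵀ Q yᵀ)` for some `Q`, and since `F` is separable its subgradients split into
row subgradients of the `hᵢ`. Conversely, for consensus `x` the pairing of `D = -c Uᵀ q` with
`x - xs` is `-c tr (q (U (x - xs))ᵀ) = 0`, so summing the subgradient inequalities gives optimality.
-/

open Matrix

noncomputable section

def IsSubgradAt {p : ℕ} (h : (Fin p → ℝ) → ℝ) (d x : Fin p → ℝ) : Prop :=
  ∀ y, h x + d ⬝ᵥ (y - x) ≤ h y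

open Set

theorem ConvexOn.fun_sum {𝕜 E β ι : Type*} [Semiring 𝕜] [PartialOrder 𝕜] [AddCommMonoid E]
    [AddCommMonoid β] [PartialOrder β] [IsOrderedAddMonoid β] [SMul 𝕜 E] [Module 𝕜 β]
    {s : Set E} (hs : Convex 𝕜 s) (t : Finset ι) {f : ι → E → β}
    (hf : ∀ i ∈ t, ConvexOn 𝕜 s (f i)) : ConvexOn 𝕜 s fun x => ∑ i ∈ t, f i x := by
  rw [← Finset.sum_fn]
  exact Finset.sum_induction f (ConvexOn 𝕜 s) (fun _ _ => ConvexOn.add) (convexOn_const 0 hs) hf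

theorem LinearMap.eq_zero_of_forall_le_of_mem {𝕜 M : Type*} [Field 𝕜] [LinearOrder 𝕜]
    [IsStrictOrderedRing 𝕜] [AddCommGroup M] [Module 𝕜 M] (g : M →ₗ[𝕜] 𝕜) {V : Submodule 𝕜 M}
    {c : 𝕜} (hg : ∀ v ∈ V, c ≤ g v) {v : M} (hv : v ∈ V) : g v = 0 := by
  by_contra hgv
  have := hg (((c - 1) / g v) • v) (V.smul_mem _ hv)
  rw [map_smul, smul_eq_mul, div_mul_cancel₀ _ hgv] at this
  linarith

theorem ConvexOn.exists_subgradient_vanishing_of_isMinOn {E : Type*} [TopologicalSpace E]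
    [AddCommGroup E] [Module ℝ E] [IsTopologicalAddGroup E] [ContinuousSMul ℝ E]
    {F : E → ℝ} (hF : ConvexOn ℝ univ F) (hFc : Continuous F) {V : Submodule ℝ E} {x₀ : E}
    (hx₀ : x₀ ∈ V) (hmin : IsMinOn F V x₀) :
    ∃ φ : StrongDual ℝ E, (∀ v ∈ V, φ v = 0) ∧ ∀ y, F x₀ + φ (y - x₀) ≤ F y := by
  set S : Set (E × ℝ) := {p | p.1 ∈ univ ∧ F p.1 < p.2}
  have hS_open : IsOpen S := by
    simp only [S, mem_univ, true_and]
    exact isOpen_lt (hFc.comp continuous_fst) continuous_snd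
  have hdisj : Disjoint S ((V : Set E) ×ˢ {F x₀}) := by
    rw [Set.disjoint_left]
    rintro ⟨y, t⟩ ⟨-, hlt⟩ ⟨hy, rfl : t = F x₀⟩
    exact (hmin hy).not_gt hlt
  obtain ⟨f, u, hfS, hfV⟩ := geometric_hahn_banach_open hF.convex_strict_epigraph hS_open
    (V.convex.prod (convex_singleton _)) hdisj
  set φ₀ := f.comp (ContinuousLinearMap.inl ℝ E ℝ)
  set β := f (0, 1)
  have hf_apply : ∀ y t, f (y, t) = φ₀ y + t * β := by
    intro y t
    have : ((y, t) : E × ℝ) = (y, 0) + t • (0, 1) := by simp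
    rw [this, map_add, map_smul, smul_eq_mul]
    rfl
  have hφ₀V : ∀ v ∈ V, φ₀ v = 0 := fun v hv =>
    φ₀.toLinearMap.eq_zero_of_forall_le_of_mem (c := u - F x₀ * β) (fun w hw => by
      have := hfV (w, F x₀) ⟨hw, rfl⟩
      rw [hf_apply] at this
      simp only [ContinuousLinearMap.coe_coe]
      linarith) hv
  have hu : u ≤ F x₀ * β := by
    simpa [hf_apply, hφ₀V x₀ hx₀] using hfV (x₀, F x₀) ⟨hx₀, rfl⟩
  -- the separating hyperplane is not vertical, so it is the graph of an affine minorant of `F`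
  have hβ : β < 0 := by
    have := hfS (x₀, F x₀ + 1) ⟨trivial, by simp⟩
    rw [hf_apply, hφ₀V x₀ hx₀] at this
    linarith
  have hsupport : ∀ y, φ₀ y ≤ -β * (F y - F x₀) := by
    intro y
    refine le_of_forall_pos_lt_add fun ε hε => ?_
    have := hfS (y, F y + ε / -β) ⟨trivial, by simp only; linarith [div_pos hε (neg_pos.2 hβ)]⟩
    rw [hf_apply, add_mul, div_mul_eq_mul_div, div_neg, mul_div_cancel_right₀ _ hβ.ne] at this
    linarith
  refine ⟨(-β)⁻¹ • φ₀, fun v hv => by simp [hφ₀V v hv], fun y => ?_⟩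
  have := (inv_mul_le_iff₀ (neg_pos.2 hβ)).2 (hsupport y)
  rw [_root_.smul_apply, map_sub, hφ₀V x₀ hx₀, sub_zero, smul_eq_mul]
  linarith

theorem Matrix.trace_transpose_mul_mul_transpose {R l m n : Type*} [CommSemiring R] [Fintype l]
    [Fintype m] [Fintype n] (U : Matrix l m R) (Q : Matrix l n R) (y : Matrix m n R) :
    trace (Uᵀ * Q * yᵀ) = trace (Q * (U * y)ᵀ) := by
  rw [transpose_mul, ← Matrix.mul_assoc, trace_mul_comm (Q * yᵀ), ← Matrix.mul_assoc]

theorem Module.Dual.exists_eq_trace_mul_transpose {K m n : Type*} [Field K] [Fintype m]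
    [Fintype n] [DecidableEq m] [DecidableEq n] (ψ : Module.Dual K (Matrix m n K)) :
    ∃ Q : Matrix m n K, ∀ y, ψ y = trace (Q * yᵀ) := by
  refine ⟨Matrix.of fun i j => ψ (single i j 1), fun y => ?_⟩
  conv_lhs => rw [matrix_eq_sum_single y]
  simp only [map_sum, trace, diag, mul_apply, of_apply]
  refine Finset.sum_congr rfl fun i _ => Finset.sum_congr rfl fun j _ => ?_
  rw [← mul_one (y i j), ← smul_eq_mul, ← smul_single, map_smul, smul_eq_mul]
  exact mul_comm _ _

theorem Matrix.exists_eq_trace_transpose_mul_of_forall_mul_eq_zero {K l m n : Type*} [Field K]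
    [Fintype l] [Fintype m] [Fintype n] [DecidableEq l] [DecidableEq n] (U : Matrix l m K)
    (φ : Module.Dual K (Matrix m n K)) (hφ : ∀ y : Matrix m n K, U * y = 0 → φ y = 0) :
    ∃ Q : Matrix l n K, ∀ y, φ y = trace (Uᵀ * Q * yᵀ) := by
  have : φ ∈ (LinearMap.ker (mulLeftLinearMap n K U)).dualAnnihilator :=
    (Submodule.mem_dualAnnihilator φ).2 hφ
  rw [← LinearMap.range_dualMap_eq_dualAnnihilator_ker] at this
  obtain ⟨ψ, rfl⟩ := this
  obtain ⟨Q, hQ⟩ := ψ.exists_eq_trace_mul_transpose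
  exact ⟨Q, fun y => by rw [LinearMap.dualMap_apply, hQ, trace_transpose_mul_mul_transpose]; rfl⟩

theorem exists_eq_const_iff_forall_eq {ι α : Type*} [Nonempty α] (v : ι → α) :
    (∃ a, v = fun _ => a) ↔ ∀ i j, v i = v j := by
  refine ⟨fun ⟨a, ha⟩ i j => by rw [ha], fun hv => ?_⟩
  rcases isEmpty_or_nonempty ι with hι | ⟨⟨i₀⟩⟩
  · exact ⟨Classical.arbitrary α, funext hι.elim⟩
  · exact ⟨v i₀, funext fun i => hv i i₀⟩

theorem Matrix.mul_eq_zero_iff_rows_eq {R l m n : Type*} [Semiring R] [Fintype m]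
    {U : Matrix l m R} (hU : ∀ v : m → R, U *ᵥ v = 0 ↔ ∃ a, v = fun _ => a) (x : Matrix m n R) :
    U * x = 0 ↔ ∀ i j, x i = x j := by
  calc U * x = 0 ↔ ∀ k, U *ᵥ xᵀ k = 0 := by
        simp only [← ext_iff, funext_iff, zero_apply, Pi.zero_apply]
        exact forall_comm
    _ ↔ ∀ k i j, x i k = x j k := by simp only [hU, exists_eq_const_iff_forall_eq]; rfl
    _ ↔ ∀ i j, x i = x j := by
        simp only [funext_iff]
        exact ⟨fun hx i j k => hx k i j, fun hx k i j => hx i j k⟩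

theorem isSubgradAt_rows_iff {ι : Type*} [Fintype ι] [DecidableEq ι] {p : ℕ}
    {h : ι → (Fin p → ℝ) → ℝ} {x D : Matrix ι (Fin p) ℝ} :
    (∀ i, IsSubgradAt (h i) (D i) (x i)) ↔
      ∀ y : Matrix ι (Fin p) ℝ, ∑ i, h i (x i) + trace (D * (y - x)ᵀ) ≤ ∑ i, h i (y i) := by
  have hpair : ∀ y : Matrix ι (Fin p) ℝ, trace (D * (y - x)ᵀ) = ∑ i, D i ⬝ᵥ (y i - x i) :=
    fun _ => rfl
  simp_rw [hpair, ← Finset.sum_add_distrib]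
  refine ⟨fun hD y => Finset.sum_le_sum fun i _ => hD i (y i), fun H i w => ?_⟩
  have hrest : ∑ j ∈ Finset.univ.erase i, (h j (x j) + D j ⬝ᵥ (updateRow x i w j - x j)) =
      ∑ j ∈ Finset.univ.erase i, h j (updateRow x i w j) :=
    Finset.sum_congr rfl fun j hj => by
      rw [updateRow_ne (Finset.ne_of_mem_erase hj), sub_self, dotProduct_zero, add_zero]
  have := H (updateRow x i w)
  rw [← Finset.add_sum_erase _ _ (Finset.mem_univ i),
    ← Finset.add_sum_erase _ _ (Finset.mem_univ i), hrest, updateRow_self] at this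
  exact le_of_add_le_add_right this

theorem stmt_1_general (n p : ℕ)
    (c : ℝ) (hc : c ≠ 0)
    (U : Matrix (Fin (n - 1)) (Fin n) ℝ)
    (hU : ∀ v : Fin n → ℝ, U.mulVec v = 0 ↔ ∃ a : ℝ, v = fun _ => a)
    (h : Fin n → (Fin p → ℝ) → ℝ)
    (hconv : ∀ i, ConvexOn ℝ Set.univ (h i))
    (xs : Matrix (Fin n) (Fin p) ℝ) :
    -- `xs` is an optimal solution of the consensus optimization problem
    ((∀ i j : Fin n, xs i = xs j) ∧
      ∀ x : Matrix (Fin n) (Fin p) ℝ,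
        (∀ i j : Fin n, x i = x j) →
          ∑ i, h i (xs i) ≤ ∑ i, h i (x i))
    ↔
    (∃ (q : Matrix (Fin (n - 1)) (Fin p) ℝ) (D : Matrix (Fin n) (Fin p) ℝ),
      (∀ i, IsSubgradAt (h i) (D i) (xs i)) ∧
      D + c • (Uᵀ * q) = 0 ∧
      U * xs = 0) := by
  simp_rw [← mul_eq_zero_iff_rows_eq hU]
  constructor
  · rintro ⟨hxs, hmin⟩
    have hF : ConvexOn ℝ univ fun x : Matrix (Fin n) (Fin p) ℝ => ∑ i, h i (x i) :=
      ConvexOn.fun_sum convex_univ _ fun i _ =>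
        (hconv i).comp_linearMap (LinearMap.proj i : (Fin n → Fin p → ℝ) →ₗ[ℝ] Fin p → ℝ)
    have hFc : Continuous fun x : Matrix (Fin n) (Fin p) ℝ => ∑ i, h i (x i) :=
      continuous_finsetSum _ fun i _ =>
        (continuousOn_univ.1 ((hconv i).continuousOn isOpen_univ)).comp (continuous_apply i)
    obtain ⟨φ, hφV, hφ⟩ := hF.exists_subgradient_vanishing_of_isMinOn hFc
      (V := LinearMap.ker (mulLeftLinearMap (Fin p) ℝ U)) hxs fun x hx => hmin x hx
    obtain ⟨Q, hQ⟩ := U.exists_eq_trace_transpose_mul_of_forall_mul_eq_zero φ.toLinearMap hφV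
    refine ⟨-c⁻¹ • Q, Uᵀ * Q, isSubgradAt_rows_iff.2 fun y => ?_, ?_, hxs⟩
    · convert hφ y using 2
      exact (hQ (y - xs)).symm
    · rw [Matrix.mul_smul, smul_smul, mul_neg, mul_inv_cancel₀ hc, neg_one_smul, add_neg_cancel]
  · rintro ⟨q, D, hD, hDq, hxs⟩
    refine ⟨hxs, fun x hx => ?_⟩
    have hpair : trace (D * (x - xs)ᵀ) = 0 := by
      rw [eq_neg_of_add_eq_zero_left hDq, Matrix.neg_mul, smul_mul, trace_neg, trace_smul,
        trace_transpose_mul_mul_transpose, Matrix.mul_sub, hx, hxs, sub_zero, transpose_zero,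
        Matrix.mul_zero, trace_zero, smul_zero, neg_zero]
    have := isSubgradAt_rows_iff.1 hD x
    rwa [hpair, add_zero] at this

/-- First-order optimality conditions for the consensus optimization problem
`min Σᵢ hᵢ(xᵢ) s.t. x₁ = x₂ = ⋯ = xₙ` (Lemma 2). -/
theorem stmt_1 (n p : ℕ) (hn : 2 ≤ n) (hp : 1 ≤ p)
    (c : ℝ) (hc : c ≠ 0)
    (U : Matrix (Fin (n - 1)) (Fin n) ℝ)
    (hU : ∀ v : Fin n → ℝ, U.mulVec v = 0 ↔ ∃ a : ℝ, v = fun _ => a)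
    (h : Fin n → (Fin p → ℝ) → ℝ)
    (hconv : ∀ i, ConvexOn ℝ Set.univ (h i))
    (xs : Matrix (Fin n) (Fin p) ℝ) :
    -- `xs` is an optimal solution of the consensus optimization problem
    ((∀ i j : Fin n, xs i = xs j) ∧
      ∀ x : Matrix (Fin n) (Fin p) ℝ,
        (∀ i j : Fin n, x i = x j) →
          ∑ i, h i (xs i) ≤ ∑ i, h i (x i))
    ↔
    (∃ (q : Matrix (Fin (n - 1)) (Fin p) ℝ) (D : Matrix (Fin n) (Fin p) ℝ),
      (∀ i, IsSubgradAt (h i) (D i) (xs i)) ∧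
      D + c • (Uᵀ * q) = 0 ∧
      U * xs = 0) :=
  stmt_1_general n p c hc U hU h hconv xs
end
end

section
/- Let sequences x^k, D^k ∈ ℝ^{n×p} (k ≥ 0) and y^k ∈ ℝ^{n×p} (k ≥ −1) satisfy y^{−1} = 0, y^k = y^{k−1} + 𝕃 D^k for all k ≥ 0, and B (D^{k+1} − D^k) + x^{k+1} − r + 2c y^k − c y^{k−1} = 0 for all k ≥ 0. Define q^0 = U D^0 and q^{k+1} = q^k + U D^{k+1} for k ≥ 0. Then for all k ≥ 0: x^{k+1} − r + c Uᵀ q^{k+1} + (B − c𝕃)(D^{k+1} − D^k) = 0 and y^k = Uᵀ q^k. -/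
open Matrix

noncomputable section

/-- Compact recursive relations of Mirror-P-EXTRA (Lemma 3).
Here `ym k` plays the role of `y^{k-1}` (so `ym 0 = y^{-1} = 0` and `y^k = ym (k+1)`). -/
theorem stmt_2 (n p : ℕ) (hn : 2 ≤ n) (hp : 1 ≤ p)
    (U : Matrix (Fin (n - 1)) (Fin n) ℝ)
    (hU : ∀ v : Fin n → ℝ, U.mulVec v = 0 ↔ ∃ a : ℝ, v = fun _ => a)
    (r : Matrix (Fin n) (Fin p) ℝ)
    (c : ℝ) (hc : 0 < c)
    (β : Fin n → ℝ) (hβ : ∀ i, 0 < β i)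
    (x D : ℕ → Matrix (Fin n) (Fin p) ℝ)
    (ym : ℕ → Matrix (Fin n) (Fin p) ℝ)
    (q : ℕ → Matrix (Fin (n - 1)) (Fin p) ℝ)
    -- `y^{-1} = 0`
    (hym0 : ym 0 = 0)
    -- `y^k = y^{k-1} + 𝕃 D^k` for all `k ≥ 0`
    (hymrec : ∀ k : ℕ, ym (k + 1) = ym k + (Uᵀ * U) * D k)
    -- `B (D^{k+1} - D^k) + x^{k+1} - r + 2c y^k - c y^{k-1} = 0` for all `k ≥ 0`
    (hrec : ∀ k : ℕ,
      (Matrix.diagonal β) * (D (k + 1) - D k) + x (k + 1) - r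
        + (2 * c) • ym (k + 1) - c • ym k = 0)
    -- `q^0 = U D^0` and `q^{k+1} = q^k + U D^{k+1}`
    (hq0 : q 0 = U * D 0)
    (hqrec : ∀ k : ℕ, q (k + 1) = q k + U * D (k + 1)) :
    ∀ k : ℕ,
      x (k + 1) - r + c • (Uᵀ * q (k + 1))
        + (Matrix.diagonal β - c • (Uᵀ * U)) * (D (k + 1) - D k) = 0 ∧
      ym (k + 1) = Uᵀ * q k := by
  have hy : ∀ k : ℕ, ym (k + 1) = Uᵀ * q k := by
    intro k
    induction k with
    | zero => rw [hymrec, hym0, hq0, Matrix.mul_assoc, zero_add]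
    | succ k ih => rw [hymrec, ih, hqrec, Matrix.mul_add, Matrix.mul_assoc]
  intro k
  refine ⟨?_, hy k⟩
  have hL : (Uᵀ * U) * D k = ym (k + 1) - ym k := by
    rw [hymrec k]; abel
  calc x (k + 1) - r + c • (Uᵀ * q (k + 1))
        + (Matrix.diagonal β - c • (Uᵀ * U)) * (D (k + 1) - D k)
      = (Matrix.diagonal β) * (D (k + 1) - D k) + x (k + 1) - r
        + (2 * c) • ym (k + 1) - c • ym k := by
        rw [← hy (k + 1), hymrec (k + 1)]
        simp only [Matrix.sub_mul, Matrix.mul_sub, Matrix.smul_mul, smul_add, smul_sub]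
        rw [hL]
        module
    _ = 0 := hrec k
end
end

section
/- For any Mirror-P-EXTRA trajectory (x^k, q^k, D^k) and any optimal triple (x*, q*, D*), the following contraction inequality holds for every k ≥ 0: ‖z^k − z^{k+1}‖_M² ≤ ‖z^k − z*‖_M² − ‖z^{k+1} − z*‖_M², where z^k = (q^k, D^k) and z* = (q*, D*). -/
open Matrix

noncomputable section

/-- Squared Frobenius norm. -/
def frobSq {m p : ℕ} (A : Matrix (Fin m) (Fin p) ℝ) : ℝ := ∑ i, ∑ j, (A i j) ^ 2

/-- Squared `P`-weighted seminorm `⟨A, P A⟩ = tr(Aᵀ P A)`. -/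
def wSq {m p : ℕ} (P : Matrix (Fin m) (Fin m) ℝ) (A : Matrix (Fin m) (Fin p) ℝ) : ℝ :=
  Matrix.trace (Aᵀ * P * A)

/-- The squared `M`-seminorm of a pair `z = (q, D)`:
`‖z‖_M² = c ‖q‖_F² + ‖D‖²_{B - c𝕃}`. -/
def Msq {n p : ℕ} (c : ℝ) (P : Matrix (Fin n) (Fin n) ℝ)
    (q : Matrix (Fin (n - 1)) (Fin p) ℝ) (D : Matrix (Fin n) (Fin p) ℝ) : ℝ :=
  c * frobSq q + wSq P D

/- ### Auxiliary inner-product machinery -/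

/-- Frobenius inner product of two matrices. -/
def ip {m p : ℕ} (A B : Matrix (Fin m) (Fin p) ℝ) : ℝ := ∑ i, ∑ j, A i j * B i j

lemma ip_comm {m p : ℕ} (A B : Matrix (Fin m) (Fin p) ℝ) : ip A B = ip B A := by
  simp [ip, mul_comm]

lemma ip_add_right {m p : ℕ} (A B C : Matrix (Fin m) (Fin p) ℝ) :
    ip A (B + C) = ip A B + ip A C := by
  simp [ip, mul_add, Finset.sum_add_distrib]

lemma ip_sub_right {m p : ℕ} (A B C : Matrix (Fin m) (Fin p) ℝ) :
    ip A (B - C) = ip A B - ip A C := by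
  simp [ip, mul_sub, Finset.sum_sub_distrib]

lemma ip_sub_left {m p : ℕ} (A B C : Matrix (Fin m) (Fin p) ℝ) :
    ip (A - B) C = ip A C - ip B C := by
  simp [ip, sub_mul, Finset.sum_sub_distrib]

lemma ip_smul_right {m p : ℕ} (r : ℝ) (A B : Matrix (Fin m) (Fin p) ℝ) :
    ip A (r • B) = r * ip A B := by
  simp [ip, Finset.mul_sum, mul_left_comm]

lemma ip_eq_trace {m p : ℕ} (A B : Matrix (Fin m) (Fin p) ℝ) :
    ip A B = Matrix.trace (Aᵀ * B) := by
  simp only [ip, Matrix.trace, Matrix.diag, Matrix.mul_apply, Matrix.transpose_apply]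
  exact Finset.sum_comm

lemma ip_adjoint {m m' p : ℕ} (M : Matrix (Fin m') (Fin m) ℝ)
    (A : Matrix (Fin m) (Fin p) ℝ) (B : Matrix (Fin m') (Fin p) ℝ) :
    ip A (Mᵀ * B) = ip (M * A) B := by
  rw [ip_eq_trace, ip_eq_trace, ← Matrix.mul_assoc, ← Matrix.transpose_mul]

lemma frobSq_eq_ip {m p : ℕ} (A : Matrix (Fin m) (Fin p) ℝ) : frobSq A = ip A A := by
  simp [frobSq, ip, sq]

lemma wSq_eq_ip {m p : ℕ} (P : Matrix (Fin m) (Fin m) ℝ) (A : Matrix (Fin m) (Fin p) ℝ) :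
    wSq P A = ip A (P * A) := by
  rw [wSq, Matrix.mul_assoc, ← ip_eq_trace]

lemma ipP_comm {m p : ℕ} (P : Matrix (Fin m) (Fin m) ℝ) (hP : Pᵀ = P)
    (A B : Matrix (Fin m) (Fin p) ℝ) : ip A (P * B) = ip B (P * A) := by
  conv_lhs => rw [← hP]
  rw [ip_adjoint, ip_comm]

lemma ip_polar {m p : ℕ} (a b : Matrix (Fin m) (Fin p) ℝ) :
    ip (a - b) (a - b) = ip a a - ip b b + 2 * ip b (b - a) := by
  simp only [ip_sub_left, ip_sub_right]
  rw [ip_comm a b]; ring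

lemma ipP_polar {m p : ℕ} (P : Matrix (Fin m) (Fin m) ℝ) (hP : Pᵀ = P)
    (a b : Matrix (Fin m) (Fin p) ℝ) :
    ip (a - b) (P * (a - b)) = ip a (P * a) - ip b (P * b) + 2 * ip b (P * (b - a)) := by
  simp only [Matrix.mul_sub, ip_sub_left, ip_sub_right]
  rw [ipP_comm P hP a b]; ring

/-- Contraction inequality for Mirror-P-EXTRA (part of Theorem 1). -/
theorem stmt_3 (n p : ℕ) (hn : 2 ≤ n) (hp : 1 ≤ p)
    (U : Matrix (Fin (n - 1)) (Fin n) ℝ)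
    (hU : ∀ v : Fin n → ℝ, U.mulVec v = 0 ↔ ∃ a : ℝ, v = fun _ => a)
    (r : Matrix (Fin n) (Fin p) ℝ)
    (h : Fin n → (Fin p → ℝ) → ℝ)
    (hconv : ∀ i, ConvexOn ℝ Set.univ (h i))
    (c : ℝ) (hc : 0 < c)
    (β : Fin n → ℝ) (hβ : ∀ i, 0 < β i)
    (hPSD : (Matrix.diagonal β - c • (Uᵀ * U)).PosSemidef)
    -- Mirror-P-EXTRA trajectory
    (x D : ℕ → Matrix (Fin n) (Fin p) ℝ)
    (q : ℕ → Matrix (Fin (n - 1)) (Fin p) ℝ)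
    (hsub : ∀ k i, IsSubgradAt (h i) (D k i) (x k i))
    (hrec1 : ∀ k : ℕ,
      x (k + 1) - r + c • (Uᵀ * q (k + 1))
        + (Matrix.diagonal β - c • (Uᵀ * U)) * (D (k + 1) - D k) = 0)
    (hrec2 : ∀ k : ℕ, q (k + 1) = q k + U * D (k + 1))
    -- optimal triple
    (xs Ds : Matrix (Fin n) (Fin p) ℝ)
    (qs : Matrix (Fin (n - 1)) (Fin p) ℝ)
    (hsubs : ∀ i, IsSubgradAt (h i) (Ds i) (xs i))
    (hopt1 : xs - r + c • (Uᵀ * qs) = 0)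
    (hopt2 : U * Ds = 0) :
    ∀ k : ℕ,
      Msq c (Matrix.diagonal β - c • (Uᵀ * U)) (q k - q (k + 1)) (D k - D (k + 1)) ≤
        Msq c (Matrix.diagonal β - c • (Uᵀ * U)) (q k - qs) (D k - Ds)
          - Msq c (Matrix.diagonal β - c • (Uᵀ * U)) (q (k + 1) - qs) (D (k + 1) - Ds) := by
  intro k
  set P : Matrix (Fin n) (Fin n) ℝ := Matrix.diagonal β - c • (Uᵀ * U) with hPdef
  have hPt : Pᵀ = P := by
    rw [hPdef]
    simp [Matrix.transpose_sub, Matrix.transpose_smul, Matrix.transpose_mul]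
  -- U applied to the dual-variable difference
  have hUA : U * (D (k + 1) - Ds) = q (k + 1) - q k := by
    rw [Matrix.mul_sub, hopt2, hrec2 k]; abel
  -- monotonicity of the subdifferential
  have mono : 0 ≤ ip (D (k + 1) - Ds) (x (k + 1) - xs) := by
    unfold ip
    refine Finset.sum_nonneg fun i _ => ?_
    have h1 := hsub (k + 1) i (xs i)
    have h2 := hsubs i (x (k + 1) i)
    have e : D (k + 1) i ⬝ᵥ (xs i - x (k + 1) i) = -(D (k + 1) i ⬝ᵥ (x (k + 1) i - xs i)) := by
      rw [← dotProduct_neg]; congr 1; abel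
    rw [e] at h1
    have key2 : 0 ≤ (D (k + 1) i - Ds i) ⬝ᵥ (x (k + 1) i - xs i) := by
      rw [sub_dotProduct]; linarith
    simpa [dotProduct, Matrix.sub_apply, Pi.sub_apply] using key2
  -- combined first-order condition
  have h4 : x (k + 1) - xs + c • (Uᵀ * q (k + 1)) - c • (Uᵀ * qs) + P * (D (k + 1) - D k)
      = 0 := by
    rw [show x (k + 1) - xs + c • (Uᵀ * q (k + 1)) - c • (Uᵀ * qs) + P * (D (k + 1) - D k)
        = (x (k + 1) - r + c • (Uᵀ * q (k + 1)) + P * (D (k + 1) - D k))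
          - (xs - r + c • (Uᵀ * qs)) from by abel,
      hrec1 k, hopt1, sub_zero]
  have h5 : ip (D (k + 1) - Ds)
      (x (k + 1) - xs + c • (Uᵀ * q (k + 1)) - c • (Uᵀ * qs) + P * (D (k + 1) - D k)) = 0 := by
    rw [h4]; simp [ip]
  have e1 : ip (D (k + 1) - Ds)
      (x (k + 1) - xs + c • (Uᵀ * q (k + 1)) - c • (Uᵀ * qs) + P * (D (k + 1) - D k))
      = ip (D (k + 1) - Ds) (x (k + 1) - xs)
        + c * ip (q (k + 1) - q k) (q (k + 1) - qs)
        + ip (D (k + 1) - Ds) (P * (D (k + 1) - D k)) := by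
    simp only [ip_add_right, ip_sub_right, ip_smul_right, ip_adjoint, hUA]
    ring
  have key : c * ip (q (k + 1) - qs) (q (k + 1) - q k)
      + ip (D (k + 1) - Ds) (P * (D (k + 1) - D k)) ≤ 0 := by
    rw [e1] at h5
    rw [ip_comm (q (k + 1) - qs) (q (k + 1) - q k)]
    linarith
  -- polarization and conclusion
  have hq : q k - q (k + 1) = (q k - qs) - (q (k + 1) - qs) := by abel
  have hD : D k - D (k + 1) = (D k - Ds) - (D (k + 1) - Ds) := by abel
  have hq2 : (q (k + 1) - qs) - (q k - qs) = q (k + 1) - q k := by abel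
  have hD2 : (D (k + 1) - Ds) - (D k - Ds) = D (k + 1) - D k := by abel
  simp only [Msq, frobSq_eq_ip, wSq_eq_ip]
  rw [hq, hD, ip_polar, ipP_polar P hPt, hq2, hD2]
  nlinarith [key]
end
end

section
/- Suppose an optimal triple (x*, q*, D*) exists. Then for any Mirror-P-EXTRA trajectory (x^k, q^k, D^k), the sequence {x^k} converges to a matrix x̂ ∈ ℝ^{n×p} that is an optimal solution of min_{x∈ℝ^{n×p}} Σ_{i=1}^n h_i(x_i) subject to Σ_{i=1}^n (x_i − r_i) = 0. -/
open Matrix Filter Topology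

noncomputable section

/-! For any optimal triple `(x*, q*, D*)`, `V k = c ‖q^k - q*‖² + ‖D^k - D*‖²_{B - c𝕃}` satisfies
`V (k+1) + c ‖q^{k+1} - q^k‖² + ‖D^{k+1} - D^k‖²_{B - c𝕃} ≤ V k`: pair the recursion with
`D^{k+1} - D*`, use `U (D^{k+1} - D*) = q^{k+1} - q^k` and polarisation; what is left is
`⟨D^{k+1} - D*, x^{k+1} - x*⟩ ≥ 0`, the monotonicity of subdifferentials.
So `q^{k+1} - q^k → 0`, and since `‖·‖²_B = ‖·‖²_{B - c𝕃} + c ‖U ·‖²` with `B` positive definite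
and `U (D^{k+2} - D^{k+1})` a second difference of `q`, also `D^{k+1} - D^k → 0`; moreover the
iterates are bounded. By `x^{k+1} = r - c Uᵀ q^{k+1} - (B - c𝕃) (D^{k+1} - D^k)` and closedness of
subdifferentials, a cluster point of `(q^k, D^k)` gives a new optimal triple. Its `V` is
nonincreasing and tends to `0` along the subsequence, so the whole trajectory converges to it.
Finally `U D̂ = 0` makes all rows of `D̂` equal: a common multiplier for `∑ (x_i - r_i) = 0`. -/

section FrobeniusInner

variable {m l n : Type*} [Fintype m] [Fintype l] [Fintype n]

def frobInner (A B : Matrix m n ℝ) : ℝ := ∑ i, ∑ j, A i j * B i j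

lemma frobInner_comm (A B : Matrix m n ℝ) : frobInner A B = frobInner B A := by
  simp only [frobInner, mul_comm]

lemma frobInner_add_right (A B C : Matrix m n ℝ) :
    frobInner A (B + C) = frobInner A B + frobInner A C := by
  simp only [frobInner, Matrix.add_apply, mul_add, Finset.sum_add_distrib]

lemma frobInner_sub_right (A B C : Matrix m n ℝ) :
    frobInner A (B - C) = frobInner A B - frobInner A C := by
  simp only [frobInner, Matrix.sub_apply, mul_sub, Finset.sum_sub_distrib]

lemma frobInner_sub_left (A B C : Matrix m n ℝ) :
    frobInner (A - B) C = frobInner A C - frobInner B C := by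
  simp only [frobInner, Matrix.sub_apply, sub_mul, Finset.sum_sub_distrib]

lemma frobInner_smul_right (a : ℝ) (A B : Matrix m n ℝ) :
    frobInner A (a • B) = a * frobInner A B := by
  simp only [frobInner, Matrix.smul_apply, smul_eq_mul, Finset.mul_sum, mul_left_comm]

lemma frobInner_zero_right (A : Matrix m n ℝ) : frobInner A 0 = 0 := by
  simp [frobInner]

lemma frobInner_eq_trace (A B : Matrix m n ℝ) : frobInner A B = trace (Aᵀ * B) := by
  simp only [frobInner, trace, diag_apply, mul_apply, transpose_apply]
  exact Finset.sum_comm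

lemma frobInner_mul_left (W : Matrix l m ℝ) (A : Matrix m n ℝ) (C : Matrix l n ℝ) :
    frobInner (W * A) C = frobInner A (Wᵀ * C) := by
  rw [frobInner_eq_trace, frobInner_eq_trace, transpose_mul, Matrix.mul_assoc]

lemma frobInner_self_nonneg (A : Matrix m n ℝ) : 0 ≤ frobInner A A :=
  Finset.sum_nonneg fun _ _ => Finset.sum_nonneg fun _ _ => mul_self_nonneg _

lemma frobInner_mul_self_nonneg {M : Matrix m m ℝ} (hM : M.PosSemidef)
    (A : Matrix m n ℝ) : 0 ≤ frobInner A (M * A) := by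
  have hcol : frobInner A (M * A) = ∑ j, Aᵀ j ⬝ᵥ (M *ᵥ Aᵀ j) := by
    simp only [frobInner, dotProduct, mul_apply, mulVec, transpose_apply, Finset.mul_sum]
    exact Finset.sum_comm
  rw [hcol]
  exact Finset.sum_nonneg fun j _ => hM.dotProduct_mulVec_nonneg (Aᵀ j)

lemma frobInner_mul_comm {M : Matrix m m ℝ} (hM : Mᵀ = M) (A B : Matrix m n ℝ) :
    frobInner A (M * B) = frobInner B (M * A) := by
  rw [frobInner_comm, frobInner_mul_left, hM]

lemma two_mul_frobInner_sub_mul_sub {M : Matrix m m ℝ} (hM : Mᵀ = M) (A B C : Matrix m n ℝ) :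
    2 * frobInner (A - B) (M * (A - C)) = frobInner (A - B) (M * (A - B))
      + frobInner (A - C) (M * (A - C)) - frobInner (B - C) (M * (B - C)) := by
  rw [show B - C = (A - C) - (A - B) by abel]
  simp only [Matrix.mul_sub, frobInner_sub_left, frobInner_sub_right]
  rw [frobInner_mul_comm hM A B, frobInner_mul_comm hM C A, frobInner_mul_comm hM C B]
  ring

lemma two_mul_frobInner_sub_sub (A B C : Matrix m n ℝ) :
    2 * frobInner (A - B) (A - C) =
      frobInner (A - B) (A - B) + frobInner (A - C) (A - C) - frobInner (B - C) (B - C) := by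
  classical
  simpa only [Matrix.one_mul] using two_mul_frobInner_sub_mul_sub (transpose_one (α := ℝ)) A B C

lemma frobInner_add_smul_transpose_mul (M : Matrix m m ℝ) (U : Matrix l m ℝ) (c : ℝ)
    (A : Matrix m n ℝ) :
    frobInner A ((M + c • (Uᵀ * U)) * A) = frobInner A (M * A) + c * frobInner (U * A) (U * A) := by
  rw [Matrix.add_mul, frobInner_add_right, Matrix.smul_mul, frobInner_smul_right,
    Matrix.mul_assoc, ← frobInner_mul_left]

lemma frobInner_diagonal_const [DecidableEq m] (a : ℝ) (A : Matrix m n ℝ) :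
    frobInner A (diagonal (fun _ : m => a) * A) = a * frobInner A A := by
  have hA : diagonal (fun _ : m => a) * A = a • A := by
    ext i j
    simp [Matrix.diagonal_mul]
  rw [hA, frobInner_smul_right]

lemma mul_sq_le_frobInner_diagonal [DecidableEq m] {β : m → ℝ} (hβ : ∀ i, 0 ≤ β i)
    (A : Matrix m n ℝ) (i : m) (j : n) : β i * A i j ^ 2 ≤ frobInner A (diagonal β * A) := by
  have hterm : ∀ i' j', 0 ≤ A i' j' * (diagonal β * A) i' j' := fun i' j' => by
    rw [diagonal_mul]
    nlinarith [hβ i', sq_nonneg (A i' j')]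
  calc β i * A i j ^ 2 = A i j * (diagonal β * A) i j := by rw [diagonal_mul]; ring
    _ ≤ A i ⬝ᵥ (diagonal β * A) i :=
      Finset.single_le_sum (fun j' _ => hterm i j') (Finset.mem_univ j)
    _ ≤ frobInner A (diagonal β * A) :=
      Finset.single_le_sum (f := fun i' => A i' ⬝ᵥ (diagonal β * A) i')
        (fun i' _ => Finset.sum_nonneg fun j' _ => hterm i' j') (Finset.mem_univ i)

lemma abs_sub_le_sqrt_of_frobInner_diagonal_le [DecidableEq m] {β : m → ℝ}
    (hβ : ∀ i, 0 < β i) {A C : Matrix m n ℝ} {R : ℝ}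
    (hA : frobInner (A - C) (diagonal β * (A - C)) ≤ R) (i : m) (j : n) :
    |A i j - C i j| ≤ √(R / β i) := by
  refine Real.abs_le_sqrt ?_
  rw [le_div_iff₀ (hβ i), mul_comm]
  exact (mul_sq_le_frobInner_diagonal (fun i => (hβ i).le) (A - C) i j).trans hA

lemma Filter.Tendsto.frobInner {α : Type*} {f : Filter α} {A B : α → Matrix m n ℝ}
    {A₀ B₀ : Matrix m n ℝ} (hA : Tendsto A f (𝓝 A₀)) (hB : Tendsto B f (𝓝 B₀)) :
    Tendsto (fun a => frobInner (A a) (B a)) f (𝓝 (frobInner A₀ B₀)) :=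
  tendsto_finsetSum _ fun i _ => tendsto_finsetSum _ fun j _ =>
    (tendsto_pi_nhds.1 (tendsto_pi_nhds.1 hA i) j).mul
      (tendsto_pi_nhds.1 (tendsto_pi_nhds.1 hB i) j)

lemma tendsto_zero_of_frobInner_diagonal [DecidableEq m] {β : m → ℝ} (hβ : ∀ i, 0 < β i)
    {A : ℕ → Matrix m n ℝ}
    (hA : Tendsto (fun k => frobInner (A k) (diagonal β * A k)) atTop (𝓝 0)) :
    Tendsto A atTop (𝓝 0) := by
  refine tendsto_pi_nhds.2 fun i => tendsto_pi_nhds.2 fun j => ?_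
  refine squeeze_zero_norm (fun k => ?_) (by simpa using (hA.div_const (β i)).sqrt)
  simpa using abs_sub_le_sqrt_of_frobInner_diagonal_le hβ (C := 0)
    (R := frobInner (A k) (diagonal β * A k)) (by rw [sub_zero]) i j

lemma exists_tendsto_subseq_of_frobInner_diagonal_le [DecidableEq m] {β : m → ℝ}
    (hβ : ∀ i, 0 < β i) {A : ℕ → Matrix m n ℝ} {C : Matrix m n ℝ} {R : ℝ}
    (hA : ∀ k, frobInner (A k - C) (diagonal β * (A k - C)) ≤ R) :
    ∃ L : Matrix m n ℝ, ∃ φ : ℕ → ℕ, StrictMono φ ∧ Tendsto (A ∘ φ) atTop (𝓝 L) := by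
  have : FirstCountableTopology (Matrix m n ℝ) :=
    inferInstanceAs (FirstCountableTopology (m → n → ℝ))
  let K : Set (Matrix m n ℝ) := Set.univ.pi fun i => Set.univ.pi fun j =>
    Set.Icc (C i j - √(R / β i)) (C i j + √(R / β i))
  have hK : IsCompact K := isCompact_univ_pi fun i => isCompact_univ_pi fun j => isCompact_Icc
  have hAK : ∀ k, A k ∈ K := fun k => Set.mem_univ_pi.2 fun i => Set.mem_univ_pi.2 fun j => by
    obtain ⟨hlo, hhi⟩ := abs_le.1 (abs_sub_le_sqrt_of_frobInner_diagonal_le hβ (hA k) i j)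
    exact ⟨by linarith, by linarith⟩
  obtain ⟨L, -, φ, hφ, hL⟩ := hK.tendsto_subseq hAK
  exact ⟨L, φ, hφ, hL⟩

end FrobeniusInner

lemma Filter.Tendsto.const_matrix_mul {α l m n : Type*} [Fintype m] {f : Filter α}
    {A : α → Matrix m n ℝ} {A₀ : Matrix m n ℝ} (W : Matrix l m ℝ) (hA : Tendsto A f (𝓝 A₀)) :
    Tendsto (fun a => W * A a) f (𝓝 (W * A₀)) :=
  ((continuous_const.matrix_mul continuous_id).tendsto A₀).comp hA

lemma Filter.Tendsto.dotProduct {ι α : Type*} [Fintype ι] {f : Filter α} {u v : α → ι → ℝ}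
    {u₀ v₀ : ι → ℝ} (hu : Tendsto u f (𝓝 u₀)) (hv : Tendsto v f (𝓝 v₀)) :
    Tendsto (fun a => u a ⬝ᵥ v a) f (𝓝 (u₀ ⬝ᵥ v₀)) :=
  tendsto_finsetSum _ fun i _ => (tendsto_pi_nhds.1 hu i).mul (tendsto_pi_nhds.1 hv i)

lemma Antitone.tendsto_sub_succ {V : ℕ → ℝ} (hV : Antitone V) (hb : BddBelow (Set.range V)) :
    Tendsto (fun k => V k - V (k + 1)) atTop (𝓝 0) := by
  have hlim := tendsto_atTop_ciInf hV hb
  simpa using hlim.sub ((tendsto_add_atTop_iff_nat 1).2 hlim)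

lemma Antitone.tendsto_of_tendsto_comp {V : ℕ → ℝ} (hV : Antitone V)
    (hb : BddBelow (Set.range V)) {φ : ℕ → ℕ} (hφ : Tendsto φ atTop atTop) {a : ℝ}
    (ha : Tendsto (V ∘ φ) atTop (𝓝 a)) : Tendsto V atTop (𝓝 a) := by
  have hlim := tendsto_atTop_ciInf hV hb
  rwa [tendsto_nhds_unique (hlim.comp hφ) ha] at hlim

namespace IsSubgradAt

variable {p : ℕ} {h : (Fin p → ℝ) → ℝ}

lemma sub_dotProduct_sub_nonneg {d x d' x' : Fin p → ℝ} (hd : IsSubgradAt h d x)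
    (hd' : IsSubgradAt h d' x') : 0 ≤ (d - d') ⬝ᵥ (x - x') := by
  have hsplit : (d - d') ⬝ᵥ (x - x') = -(d ⬝ᵥ (x' - x)) - d' ⬝ᵥ (x - x') := by
    simp only [sub_dotProduct, dotProduct_sub]
    ring
  linarith [hd x', hd' x]

lemma of_tendsto (hh : Continuous h) {α : Type*} {f : Filter α} [f.NeBot]
    {d x : α → Fin p → ℝ} {d₀ x₀ : Fin p → ℝ} (hsub : ∀ a, IsSubgradAt h (d a) (x a))
    (hd : Tendsto d f (𝓝 d₀)) (hx : Tendsto x f (𝓝 x₀)) : IsSubgradAt h d₀ x₀ := fun y =>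
  le_of_tendsto' (((hh.tendsto x₀).comp hx).add (hd.dotProduct (tendsto_const_nhds.sub hx)))
    fun a => hsub a y

end IsSubgradAt

section Optimality

variable {m l : Type*} [Fintype m] [Fintype l] {p : ℕ}

structure IsOptimalTriple (h : m → (Fin p → ℝ) → ℝ) (U : Matrix l m ℝ) (r : Matrix m (Fin p) ℝ)
    (c : ℝ) (xs Ds : Matrix m (Fin p) ℝ) (qs : Matrix l (Fin p) ℝ) : Prop where
  isSubgradAt : ∀ i, IsSubgradAt (h i) (Ds i) (xs i)
  stationary : xs - r + c • (Uᵀ * qs) = 0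
  consensus : U * Ds = 0

lemma sum_rows_eq_vecMul {n : Type*} (A : Matrix m n ℝ) : ∑ i, A i = (fun _ => 1) ᵥ* A := by
  ext j
  exact (Finset.sum_apply (M := fun _ => ℝ) j Finset.univ A).trans (by simp [vecMul, dotProduct])

namespace IsOptimalTriple

variable {h : m → (Fin p → ℝ) → ℝ} {U : Matrix l m ℝ} {r : Matrix m (Fin p) ℝ} {c : ℝ}
  {xs Ds : Matrix m (Fin p) ℝ} {qs : Matrix l (Fin p) ℝ}

lemma sum_sub_eq_zero (ho : IsOptimalTriple h U r c xs Ds qs) (hU : U *ᵥ (fun _ => 1) = 0) :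
    ∑ i, (xs i - r i) = 0 := by
  have hxs : xs - r = -(c • (Uᵀ * qs)) := eq_neg_of_add_eq_zero_left ho.stationary
  calc ∑ i, (xs i - r i) = (fun _ => 1) ᵥ* (xs - r) := sum_rows_eq_vecMul (xs - r)
    _ = -(c • ((U *ᵥ fun _ => 1) ᵥ* qs)) := by
      rw [hxs, vecMul_neg, vecMul_smul, ← vecMul_vecMul, vecMul_transpose]
    _ = 0 := by rw [hU, zero_vecMul, smul_zero, neg_zero]

lemma exists_forall_row_eq (ho : IsOptimalTriple h U r c xs Ds qs)
    (hU : ∀ v : m → ℝ, U *ᵥ v = 0 → ∃ a : ℝ, v = fun _ => a) : ∃ g : Fin p → ℝ, ∀ i, Ds i = g := by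
  have hcol : ∀ j, ∃ a : ℝ, (fun i => Ds i j) = fun _ => a := fun j => hU _ <| by
    ext k
    simpa [mulVec, dotProduct, mul_apply] using congrFun (congrFun ho.consensus k) j
  choose g hg using hcol
  exact ⟨g, fun i => funext fun j => congrFun (hg j) i⟩

lemma sum_le (ho : IsOptimalTriple h U r c xs Ds qs)
    (hU : ∀ v : m → ℝ, U *ᵥ v = 0 → ∃ a : ℝ, v = fun _ => a) (hU1 : U *ᵥ (fun _ => 1) = 0)
    {x' : Matrix m (Fin p) ℝ} (hx' : ∑ i, (x' i - r i) = 0) :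
    ∑ i, h i (xs i) ≤ ∑ i, h i (x' i) := by
  obtain ⟨g, hg⟩ := ho.exists_forall_row_eq hU
  have hbal : ∑ i, (x' i - xs i) = 0 := by
    calc ∑ i, (x' i - xs i) = ∑ i, (x' i - r i) - ∑ i, (xs i - r i) := by
          rw [← Finset.sum_sub_distrib]
          simp
      _ = 0 := by rw [hx', ho.sum_sub_eq_zero hU1, sub_zero]
  calc ∑ i, h i (xs i) = ∑ i, h i (xs i) + g ⬝ᵥ ∑ i, (x' i - xs i) := by
        rw [hbal, dotProduct_zero, add_zero]
    _ = ∑ i, (h i (xs i) + Ds i ⬝ᵥ (x' i - xs i)) := by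
        rw [dotProduct_sum, ← Finset.sum_add_distrib]
        simp only [hg]
    _ ≤ ∑ i, h i (x' i) := Finset.sum_le_sum fun i _ => ho.isSubgradAt i (x' i)

end IsOptimalTriple

end Optimality

section MirrorPExtra

variable {m l : Type*} [Fintype m] [Fintype l] {p : ℕ}

/-- `M` stands for `B - c𝕃`. -/
structure IsMirrorPExtra (h : m → (Fin p → ℝ) → ℝ) (U : Matrix l m ℝ) (M : Matrix m m ℝ)
    (r : Matrix m (Fin p) ℝ) (c : ℝ) (x D : ℕ → Matrix m (Fin p) ℝ)
    (q : ℕ → Matrix l (Fin p) ℝ) : Prop where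
  isSubgradAt : ∀ k i, IsSubgradAt (h i) (D k i) (x k i)
  x_succ : ∀ k, x (k + 1) - r + c • (Uᵀ * q (k + 1)) + M * (D (k + 1) - D k) = 0
  q_succ : ∀ k, q (k + 1) = q k + U * D (k + 1)

def lyapunov {n : Type*} [Fintype n] (M : Matrix m m ℝ) (c : ℝ) (qs : Matrix l n ℝ)
    (Ds : Matrix m n ℝ) (q : Matrix l n ℝ) (D : Matrix m n ℝ) : ℝ :=
  c * frobInner (q - qs) (q - qs) + frobInner (D - Ds) (M * (D - Ds))

section Lyapunov

variable {n : Type*} [Fintype n] {M : Matrix m m ℝ} {c : ℝ} {qs : Matrix l n ℝ}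
  {Ds : Matrix m n ℝ}

lemma mul_frobInner_le_lyapunov (hM : M.PosSemidef) (q : Matrix l n ℝ) (D : Matrix m n ℝ) :
    c * frobInner (q - qs) (q - qs) ≤ lyapunov M c qs Ds q D :=
  le_add_of_nonneg_right (frobInner_mul_self_nonneg hM _)

lemma lyapunov_nonneg (hc : 0 ≤ c) (hM : M.PosSemidef) (q : Matrix l n ℝ) (D : Matrix m n ℝ) :
    0 ≤ lyapunov M c qs Ds q D :=
  (mul_nonneg hc (frobInner_self_nonneg _)).trans (mul_frobInner_le_lyapunov hM q D)

lemma tendsto_lyapunov {α : Type*} {f : Filter α} {q : α → Matrix l n ℝ} {D : α → Matrix m n ℝ}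
    (hq : Tendsto q f (𝓝 qs)) (hD : Tendsto D f (𝓝 Ds)) :
    Tendsto (fun a => lyapunov M c qs Ds (q a) (D a)) f (𝓝 0) := by
  have hq0 : Tendsto (fun a => q a - qs) f (𝓝 0) := by simpa using hq.sub_const qs
  have hD0 : Tendsto (fun a => D a - Ds) f (𝓝 0) := by simpa using hD.sub_const Ds
  simpa [lyapunov, frobInner_zero_right] using
    ((hq0.frobInner hq0).const_mul c).add (hD0.frobInner (hD0.const_matrix_mul M))

end Lyapunov

namespace IsMirrorPExtra

variable {h : m → (Fin p → ℝ) → ℝ} {U : Matrix l m ℝ} {M : Matrix m m ℝ} {r : Matrix m (Fin p) ℝ}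
  {c : ℝ} {x D : ℕ → Matrix m (Fin p) ℝ} {q : ℕ → Matrix l (Fin p) ℝ}
  {xs Ds : Matrix m (Fin p) ℝ} {qs : Matrix l (Fin p) ℝ}

lemma mul_D_succ (ht : IsMirrorPExtra h U M r c x D q) (k : ℕ) :
    U * D (k + 1) = q (k + 1) - q k := by
  rw [ht.q_succ k]
  abel

lemma x_succ_eq (ht : IsMirrorPExtra h U M r c x D q) (k : ℕ) :
    x (k + 1) = r - c • (Uᵀ * q (k + 1)) - M * (D (k + 1) - D k) := by
  rw [← sub_eq_zero, ← ht.x_succ k]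
  abel

lemma lyapunov_eq (ht : IsMirrorPExtra h U M r c x D q) (hM : Mᵀ = M)
    (ho : IsOptimalTriple h U r c xs Ds qs) (k : ℕ) :
    lyapunov M c qs Ds (q k) (D k) = lyapunov M c qs Ds (q (k + 1)) (D (k + 1))
      + c * frobInner (q (k + 1) - q k) (q (k + 1) - q k)
      + frobInner (D (k + 1) - D k) (M * (D (k + 1) - D k))
      + 2 * frobInner (D (k + 1) - Ds) (x (k + 1) - xs) := by
  have hstep : x (k + 1) - xs + c • (Uᵀ * (q (k + 1) - qs)) + M * (D (k + 1) - D k) = 0 := by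
    calc _ = (x (k + 1) - r + c • (Uᵀ * q (k + 1)) + M * (D (k + 1) - D k))
          - (xs - r + c • (Uᵀ * qs)) := by
          rw [Matrix.mul_sub, smul_sub]
          abel
      _ = 0 := by rw [ht.x_succ k, ho.stationary, sub_zero]
  have hpair := congrArg (frobInner (D (k + 1) - Ds)) hstep
  simp only [frobInner_add_right, frobInner_smul_right, frobInner_zero_right] at hpair
  have hdual : frobInner (D (k + 1) - Ds) (Uᵀ * (q (k + 1) - qs))
      = frobInner (q (k + 1) - q k) (q (k + 1) - qs) := by
    rw [← frobInner_mul_left, Matrix.mul_sub, ho.consensus, sub_zero, ht.mul_D_succ]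
  rw [hdual, frobInner_mul_comm hM] at hpair
  have hq := two_mul_frobInner_sub_sub (q (k + 1)) (q k) qs
  have hD := two_mul_frobInner_sub_mul_sub hM (D (k + 1)) (D k) Ds
  unfold lyapunov
  linear_combination (-2 : ℝ) * hpair + c * hq + hD

lemma lyapunov_succ_add_le (ht : IsMirrorPExtra h U M r c x D q) (hM : M.PosSemidef)
    (ho : IsOptimalTriple h U r c xs Ds qs) (k : ℕ) :
    lyapunov M c qs Ds (q (k + 1)) (D (k + 1))
      + c * frobInner (q (k + 1) - q k) (q (k + 1) - q k)
      + frobInner (D (k + 1) - D k) (M * (D (k + 1) - D k))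
      ≤ lyapunov M c qs Ds (q k) (D k) := by
  have hmono : 0 ≤ frobInner (D (k + 1) - Ds) (x (k + 1) - xs) :=
    Finset.sum_nonneg fun i _ =>
      (ht.isSubgradAt (k + 1) i).sub_dotProduct_sub_nonneg (ho.isSubgradAt i)
  linarith [ht.lyapunov_eq (isHermitian_iff_isSymm.1 hM.isHermitian).eq ho k]

lemma antitone_lyapunov (ht : IsMirrorPExtra h U M r c x D q) (hc : 0 ≤ c) (hM : M.PosSemidef)
    (ho : IsOptimalTriple h U r c xs Ds qs) :
    Antitone fun k => lyapunov M c qs Ds (q k) (D k) :=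
  antitone_nat_of_succ_le fun k => by
    linarith [ht.lyapunov_succ_add_le hM ho k,
      mul_nonneg hc (frobInner_self_nonneg (q (k + 1) - q k)),
      frobInner_mul_self_nonneg hM (D (k + 1) - D k)]

lemma tendsto_lyapunov_sub_succ (ht : IsMirrorPExtra h U M r c x D q) (hc : 0 ≤ c)
    (hM : M.PosSemidef) (ho : IsOptimalTriple h U r c xs Ds qs) :
    Tendsto (fun k => lyapunov M c qs Ds (q k) (D k) - lyapunov M c qs Ds (q (k + 1)) (D (k + 1)))
      atTop (𝓝 0) :=
  (ht.antitone_lyapunov hc hM ho).tendsto_sub_succ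
    ⟨0, by rintro _ ⟨k, rfl⟩; exact lyapunov_nonneg hc hM _ _⟩

lemma tendsto_q_succ_sub (ht : IsMirrorPExtra h U M r c x D q) (hc : 0 < c) (hM : M.PosSemidef)
    (ho : IsOptimalTriple h U r c xs Ds qs) :
    Tendsto (fun k => q (k + 1) - q k) atTop (𝓝 0) := by
  classical
  refine tendsto_zero_of_frobInner_diagonal (β := fun _ => c) (fun _ => hc) ?_
  simp_rw [frobInner_diagonal_const]
  refine squeeze_zero (fun k => mul_nonneg hc.le (frobInner_self_nonneg _)) (fun k => ?_)
    (ht.tendsto_lyapunov_sub_succ hc.le hM ho)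
  linarith [ht.lyapunov_succ_add_le hM ho k, frobInner_mul_self_nonneg hM (D (k + 1) - D k)]

lemma tendsto_D_succ_sub [DecidableEq m] (ht : IsMirrorPExtra h U M r c x D q) (hc : 0 < c)
    (hM : M.PosSemidef) {β : m → ℝ} (hB : M + c • (Uᵀ * U) = diagonal β) (hβ : ∀ i, 0 < β i)
    (ho : IsOptimalTriple h U r c xs Ds qs) :
    Tendsto (fun k => D (k + 1) - D k) atTop (𝓝 0) := by
  have hM0 : Tendsto (fun k => frobInner (D (k + 1) - D k) (M * (D (k + 1) - D k))) atTop (𝓝 0) :=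
    squeeze_zero (fun k => frobInner_mul_self_nonneg hM _)
      (fun k => by
        linarith [ht.lyapunov_succ_add_le hM ho k,
          mul_nonneg hc.le (frobInner_self_nonneg (q (k + 1) - q k))])
      (ht.tendsto_lyapunov_sub_succ hc.le hM ho)
  have hU0 : Tendsto (fun k => U * (D (k + 1 + 1) - D (k + 1))) atTop (𝓝 0) := by
    have hq := ht.tendsto_q_succ_sub hc hM ho
    simpa [Matrix.mul_sub, ht.mul_D_succ] using ((tendsto_add_atTop_iff_nat 1).2 hq).sub hq
  rw [← tendsto_add_atTop_iff_nat 1]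
  refine tendsto_zero_of_frobInner_diagonal hβ ?_
  simp_rw [← hB, frobInner_add_smul_transpose_mul]
  simpa [frobInner_zero_right] using
    ((tendsto_add_atTop_iff_nat 1).2 hM0).add ((hU0.frobInner hU0).const_mul c)

lemma frobInner_diagonal_D_succ_sub_le [DecidableEq m] (ht : IsMirrorPExtra h U M r c x D q)
    (hc : 0 ≤ c) (hM : M.PosSemidef) {β : m → ℝ} (hB : M + c • (Uᵀ * U) = diagonal β)
    (ho : IsOptimalTriple h U r c xs Ds qs) (k : ℕ) :
    frobInner (D (k + 1) - Ds) (diagonal β * (D (k + 1) - Ds))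
      ≤ lyapunov M c qs Ds (q k) (D k) := by
  have hUD : U * (D (k + 1) - Ds) = q (k + 1) - q k := by
    rw [Matrix.mul_sub, ho.consensus, sub_zero, ht.mul_D_succ]
  rw [← hB, frobInner_add_smul_transpose_mul, hUD]
  have hle := ht.lyapunov_succ_add_le hM ho k
  unfold lyapunov at hle ⊢
  linarith [mul_nonneg hc (frobInner_self_nonneg (q (k + 1) - qs)),
    frobInner_mul_self_nonneg hM (D (k + 1) - D k)]

lemma tendsto_x_succ (ht : IsMirrorPExtra h U M r c x D q) {ψ : ℕ → ℕ}
    (hψ : Tendsto ψ atTop atTop) {qL : Matrix l (Fin p) ℝ}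
    (hq : Tendsto (fun k => q (ψ k + 1)) atTop (𝓝 qL))
    (hD : Tendsto (fun k => D (k + 1) - D k) atTop (𝓝 0)) :
    Tendsto (fun k => x (ψ k + 1)) atTop (𝓝 (r - c • (Uᵀ * qL))) := by
  simp_rw [ht.x_succ_eq]
  simpa using (tendsto_const_nhds.sub ((hq.const_matrix_mul Uᵀ).const_smul c)).sub
    ((hD.comp hψ).const_matrix_mul M)

lemma exists_isOptimalTriple_tendsto_subseq [DecidableEq m] (ht : IsMirrorPExtra h U M r c x D q)
    (hc : 0 < c) (hM : M.PosSemidef) {β : m → ℝ} (hB : M + c • (Uᵀ * U) = diagonal β)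
    (hβ : ∀ i, 0 < β i) (hh : ∀ i, Continuous (h i)) (ho : IsOptimalTriple h U r c xs Ds qs) :
    ∃ xb Db qb, IsOptimalTriple h U r c xb Db qb ∧ ∃ φ : ℕ → ℕ, StrictMono φ ∧
      Tendsto (fun k => q (φ k + 1)) atTop (𝓝 qb) ∧
      Tendsto (fun k => D (φ k + 1)) atTop (𝓝 Db) := by
  classical
  have hV0 : ∀ k, lyapunov M c qs Ds (q k) (D k) ≤ lyapunov M c qs Ds (q 0) (D 0) :=
    fun k => ht.antitone_lyapunov hc.le hM ho (Nat.zero_le k)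
  obtain ⟨qb, φ₁, hφ₁, hqb⟩ := exists_tendsto_subseq_of_frobInner_diagonal_le
    (β := fun _ => c) (fun _ => hc) (A := fun k => q (k + 1)) (C := qs) fun k => by
      rw [frobInner_diagonal_const]
      exact (mul_frobInner_le_lyapunov hM _ (D (k + 1))).trans (hV0 (k + 1))
  obtain ⟨Db, φ₂, hφ₂, hD⟩ := exists_tendsto_subseq_of_frobInner_diagonal_le hβ
    (A := fun k => D (φ₁ k + 1)) (C := Ds) fun k =>
      (ht.frobInner_diagonal_D_succ_sub_le hc.le hM hB ho (φ₁ k)).trans (hV0 (φ₁ k))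
  have hφ : StrictMono (φ₁ ∘ φ₂) := hφ₁.comp hφ₂
  have hq : Tendsto (fun k => q (φ₁ (φ₂ k) + 1)) atTop (𝓝 qb) := hqb.comp hφ₂.tendsto_atTop
  have hx := ht.tendsto_x_succ hφ.tendsto_atTop hq (ht.tendsto_D_succ_sub hc hM hB hβ ho)
  refine ⟨r - c • (Uᵀ * qb), Db, qb, ⟨fun i => ?_, by abel, ?_⟩, φ₁ ∘ φ₂, hφ, hq, hD⟩
  · exact IsSubgradAt.of_tendsto (hh i) (fun k => ht.isSubgradAt _ i) (tendsto_pi_nhds.1 hD i)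
      (tendsto_pi_nhds.1 hx i)
  · have hU0 : Tendsto (fun k => U * D (φ₁ (φ₂ k) + 1)) atTop (𝓝 0) := by
      simpa only [ht.mul_D_succ, Function.comp_def] using
        (ht.tendsto_q_succ_sub hc hM ho).comp hφ.tendsto_atTop
    exact tendsto_nhds_unique (hD.const_matrix_mul U) hU0

lemma exists_isOptimalTriple_tendsto [DecidableEq m] (ht : IsMirrorPExtra h U M r c x D q)
    (hc : 0 < c) (hM : M.PosSemidef) {β : m → ℝ} (hB : M + c • (Uᵀ * U) = diagonal β)
    (hβ : ∀ i, 0 < β i) (hh : ∀ i, Continuous (h i)) (ho : IsOptimalTriple h U r c xs Ds qs) :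
    ∃ xb Db qb, IsOptimalTriple h U r c xb Db qb ∧ Tendsto x atTop (𝓝 xb) := by
  obtain ⟨xb, Db, qb, hb, φ, hφ, hqφ, hDφ⟩ :=
    ht.exists_isOptimalTriple_tendsto_subseq hc hM hB hβ hh ho
  have hV : Tendsto (fun k => lyapunov M c qb Db (q k) (D k)) atTop (𝓝 0) :=
    (ht.antitone_lyapunov hc.le hM hb).tendsto_of_tendsto_comp
      ⟨0, by rintro _ ⟨k, rfl⟩; exact lyapunov_nonneg hc.le hM _ _⟩
      ((tendsto_add_atTop_nat 1).comp hφ.tendsto_atTop) (tendsto_lyapunov hqφ hDφ)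
  have hq : Tendsto q atTop (𝓝 qb) := by
    classical
    have hq0 : Tendsto (fun k => q k - qb) atTop (𝓝 0) := by
      refine tendsto_zero_of_frobInner_diagonal (β := fun _ => c) (fun _ => hc) ?_
      simp_rw [frobInner_diagonal_const]
      exact squeeze_zero (fun k => mul_nonneg hc.le (frobInner_self_nonneg _))
        (fun k => mul_frobInner_le_lyapunov hM _ (D k)) hV
    simpa using hq0.add_const qb
  have hxb : xb = r - c • (Uᵀ * qb) := by
    rw [← sub_eq_zero, ← hb.stationary]
    abel
  refine ⟨xb, Db, qb, hb, ?_⟩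
  rw [← tendsto_add_atTop_iff_nat 1, hxb]
  exact ht.tendsto_x_succ tendsto_id ((tendsto_add_atTop_iff_nat 1).2 hq)
    (ht.tendsto_D_succ_sub hc hM hB hβ ho)

end IsMirrorPExtra

end MirrorPExtra

theorem stmt_4_general (n p : ℕ)
    (U : Matrix (Fin (n - 1)) (Fin n) ℝ)
    (hU : ∀ v : Fin n → ℝ, U.mulVec v = 0 ↔ ∃ a : ℝ, v = fun _ => a)
    (r : Matrix (Fin n) (Fin p) ℝ)
    (h : Fin n → (Fin p → ℝ) → ℝ)
    (hconv : ∀ i, ConvexOn ℝ Set.univ (h i))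
    (c : ℝ) (hc : 0 < c)
    (β : Fin n → ℝ) (hβ : ∀ i, 0 < β i)
    (hPSD : (Matrix.diagonal β - c • (Uᵀ * U)).PosSemidef)
    -- Mirror-P-EXTRA trajectory
    (x D : ℕ → Matrix (Fin n) (Fin p) ℝ)
    (q : ℕ → Matrix (Fin (n - 1)) (Fin p) ℝ)
    (hsub : ∀ k i, IsSubgradAt (h i) (D k i) (x k i))
    (hrec1 : ∀ k : ℕ,
      x (k + 1) - r + c • (Uᵀ * q (k + 1))
        + (Matrix.diagonal β - c • (Uᵀ * U)) * (D (k + 1) - D k) = 0)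
    (hrec2 : ∀ k : ℕ, q (k + 1) = q k + U * D (k + 1))
    -- an optimal triple exists
    (hopt : ∃ (xs Ds : Matrix (Fin n) (Fin p) ℝ) (qs : Matrix (Fin (n - 1)) (Fin p) ℝ),
      (∀ i, IsSubgradAt (h i) (Ds i) (xs i)) ∧
      xs - r + c • (Uᵀ * qs) = 0 ∧
      U * Ds = 0) :
    ∃ xhat : Matrix (Fin n) (Fin p) ℝ,
      Tendsto x atTop (𝓝 xhat) ∧
      (∑ i, (xhat i - r i)) = 0 ∧
      ∀ x' : Matrix (Fin n) (Fin p) ℝ,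
        (∑ i, (x' i - r i)) = 0 →
          ∑ i, h i (xhat i) ≤ ∑ i, h i (x' i) := by
  obtain ⟨xs, Ds, qs, hsubs, hxs, hUDs⟩ := hopt
  have ht : IsMirrorPExtra h U (diagonal β - c • (Uᵀ * U)) r c x D q := ⟨hsub, hrec1, hrec2⟩
  have hh : ∀ i, Continuous (h i) := fun i =>
    continuousOn_univ.1 ((hconv i).continuousOn isOpen_univ)
  obtain ⟨xb, Db, qb, hb, hx⟩ :=
    ht.exists_isOptimalTriple_tendsto hc hPSD (sub_add_cancel _ _) hβ hh ⟨hsubs, hxs, hUDs⟩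
  have hU1 : U *ᵥ (fun _ => 1) = 0 := (hU _).2 ⟨1, rfl⟩
  exact ⟨xb, hx, hb.sum_sub_eq_zero hU1, fun x' hx' => hb.sum_le (fun v => (hU v).1) hU1 hx'⟩

/-- Convergence of Mirror-P-EXTRA to an optimal solution of the resource
allocation problem (part of Theorem 1). -/
theorem stmt_4 (n p : ℕ) (hn : 2 ≤ n) (hp : 1 ≤ p)
    (U : Matrix (Fin (n - 1)) (Fin n) ℝ)
    (hU : ∀ v : Fin n → ℝ, U.mulVec v = 0 ↔ ∃ a : ℝ, v = fun _ => a)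
    (r : Matrix (Fin n) (Fin p) ℝ)
    (h : Fin n → (Fin p → ℝ) → ℝ)
    (hconv : ∀ i, ConvexOn ℝ Set.univ (h i))
    (c : ℝ) (hc : 0 < c)
    (β : Fin n → ℝ) (hβ : ∀ i, 0 < β i)
    (hPSD : (Matrix.diagonal β - c • (Uᵀ * U)).PosSemidef)
    -- Mirror-P-EXTRA trajectory
    (x D : ℕ → Matrix (Fin n) (Fin p) ℝ)
    (q : ℕ → Matrix (Fin (n - 1)) (Fin p) ℝ)
    (hsub : ∀ k i, IsSubgradAt (h i) (D k i) (x k i))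
    (hrec1 : ∀ k : ℕ,
      x (k + 1) - r + c • (Uᵀ * q (k + 1))
        + (Matrix.diagonal β - c • (Uᵀ * U)) * (D (k + 1) - D k) = 0)
    (hrec2 : ∀ k : ℕ, q (k + 1) = q k + U * D (k + 1))
    -- an optimal triple exists
    (hopt : ∃ (xs Ds : Matrix (Fin n) (Fin p) ℝ) (qs : Matrix (Fin (n - 1)) (Fin p) ℝ),
      (∀ i, IsSubgradAt (h i) (Ds i) (xs i)) ∧
      xs - r + c • (Uᵀ * qs) = 0 ∧
      U * Ds = 0) :
    ∃ xhat : Matrix (Fin n) (Fin p) ℝ,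
      Tendsto x atTop (𝓝 xhat) ∧
      (∑ i, (xhat i - r i)) = 0 ∧
      ∀ x' : Matrix (Fin n) (Fin p) ℝ,
        (∑ i, (x' i - r i)) = 0 →
          ∑ i, h i (xhat i) ≤ ∑ i, h i (x' i) :=
  stmt_4_general n p U hU r h hconv c hc β hβ hPSD x D q hsub hrec1 hrec2 hopt
end
end

section
/- For any Mirror-P-EXTRA trajectory (x^k, q^k, D^k), the successive differences are monotonically non-increasing in the M-seminorm: for all k ≥ 0, ‖z^{k+1} − z^{k+2}‖_M² ≤ ‖z^k − z^{k+1}‖_M², where z^k = (q^k, D^k). -/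
open Matrix

noncomputable section

/-!
Write `u = z^k - z^{k+1}` and `v = z^{k+1} - z^{k+2}`. Subtracting consecutive instances of the
recursion expresses `x^{k+1} - x^{k+2}` through `v - u`, and monotonicity of the subdifferentials,
`⟨D^{k+1} - D^{k+2}, x^{k+1} - x^{k+2}⟩ ≥ 0`, becomes `⟨v, v - u⟩_M ≤ 0`. Since `M` is positive
semidefinite, `‖u‖_M² = ‖v‖_M² - 2⟨v, v - u⟩_M + ‖u - v‖_M² ≥ ‖v‖_M²`.
-/

lemma frobSq_eq_wSq_one {m p : ℕ} (A : Matrix (Fin m) (Fin p) ℝ) : frobSq A = wSq 1 A := by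
  simp only [frobSq, wSq, Matrix.mul_one, trace, mul_apply, diag_apply, transpose_apply, sq]
  rw [Finset.sum_comm]

lemma wSq_nonneg {m p : ℕ} {P : Matrix (Fin m) (Fin m) ℝ} (hP : P.PosSemidef)
    (A : Matrix (Fin m) (Fin p) ℝ) : 0 ≤ wSq P A := by
  simpa only [wSq, conjTranspose_eq_transpose_of_trivial] using
    (hP.conjTranspose_mul_mul_same A).trace_nonneg

lemma trace_transpose_mul_mul_comm {m p : ℕ} {P : Matrix (Fin m) (Fin m) ℝ} (hP : Pᵀ = P)
    (A B : Matrix (Fin m) (Fin p) ℝ) : trace (Aᵀ * P * B) = trace (Bᵀ * P * A) := by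
  rw [← trace_transpose (Aᵀ * P * B)]
  simp [Matrix.transpose_mul, hP, Matrix.mul_assoc]

lemma wSq_le_add_two_mul_trace {m p : ℕ} {P : Matrix (Fin m) (Fin m) ℝ} (hP : P.PosSemidef)
    (u v : Matrix (Fin m) (Fin p) ℝ) :
    wSq P v ≤ wSq P u + 2 * trace (vᵀ * P * (v - u)) := by
  have hsymm : trace (uᵀ * P * v) = trace (vᵀ * P * u) :=
    trace_transpose_mul_mul_comm (by simpa using hP.1.eq) u v
  have hexpand : wSq P (u - v) = wSq P u - 2 * trace (vᵀ * P * u) + wSq P v := by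
    simp only [wSq, transpose_sub, Matrix.sub_mul, Matrix.mul_sub, trace_sub, hsymm]
    ring
  have hcross : trace (vᵀ * P * (v - u)) = wSq P v - trace (vᵀ * P * u) := by
    rw [Matrix.mul_sub, trace_sub, wSq]
  linarith [wSq_nonneg hP (u - v)]

lemma Msq_le_of_inner_sub_nonpos {n p : ℕ} {c : ℝ} (hc : 0 ≤ c)
    {P : Matrix (Fin n) (Fin n) ℝ} (hP : P.PosSemidef) {qu qv : Matrix (Fin (n - 1)) (Fin p) ℝ}
    {Du Dv : Matrix (Fin n) (Fin p) ℝ}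
    (hinner : c * trace (qvᵀ * (qv - qu)) + trace (Dvᵀ * P * (Dv - Du)) ≤ 0) :
    Msq c P qv Dv ≤ Msq c P qu Du := by
  have hq := wSq_le_add_two_mul_trace PosSemidef.one qu qv
  have hD := wSq_le_add_two_mul_trace hP Du Dv
  rw [Matrix.mul_one] at hq
  have hcq := mul_le_mul_of_nonneg_left hq hc
  rw [Msq, Msq, frobSq_eq_wSq_one, frobSq_eq_wSq_one]
  linarith

lemma IsSubgradAt.dotProduct_sub_nonneg {p : ℕ} {f : (Fin p → ℝ) → ℝ} {d d' x x' : Fin p → ℝ}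
    (hd : IsSubgradAt f d x) (hd' : IsSubgradAt f d' x') : 0 ≤ (d - d') ⬝ᵥ (x - x') := by
  have h₁ := hd x'
  have h₂ := hd' x
  rw [← neg_sub x x', dotProduct_neg] at h₁
  rw [sub_dotProduct]
  linarith

lemma trace_transpose_mul_eq_sum_dotProduct {m p : ℕ} (A B : Matrix (Fin m) (Fin p) ℝ) :
    trace (Aᵀ * B) = ∑ i, A i ⬝ᵥ B i := by
  simp only [trace, mul_apply, diag_apply, dotProduct, transpose_apply]
  rw [Finset.sum_comm]

lemma trace_transpose_mul_sub_nonneg_of_isSubgradAt {n p : ℕ} {h : Fin n → (Fin p → ℝ) → ℝ}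
    {D D' x x' : Matrix (Fin n) (Fin p) ℝ} (hD : ∀ i, IsSubgradAt (h i) (D i) (x i))
    (hD' : ∀ i, IsSubgradAt (h i) (D' i) (x' i)) : 0 ≤ trace ((D - D')ᵀ * (x - x')) := by
  rw [trace_transpose_mul_eq_sum_dotProduct]
  exact Finset.sum_nonneg fun i _ => (hD i).dotProduct_sub_nonneg (hD' i)

lemma inner_sub_nonpos_of_trajectory {n m p : ℕ} {U : Matrix (Fin m) (Fin n) ℝ}
    {P : Matrix (Fin n) (Fin n) ℝ} {r : Matrix (Fin n) (Fin p) ℝ}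
    {h : Fin n → (Fin p → ℝ) → ℝ} {c : ℝ} {x D : ℕ → Matrix (Fin n) (Fin p) ℝ}
    {q : ℕ → Matrix (Fin m) (Fin p) ℝ} (hsub : ∀ k i, IsSubgradAt (h i) (D k i) (x k i))
    (hrec1 : ∀ k : ℕ, x (k + 1) - r + c • (Uᵀ * q (k + 1)) + P * (D (k + 1) - D k) = 0)
    (hrec2 : ∀ k : ℕ, q (k + 1) = q k + U * D (k + 1)) (k : ℕ) :
    c * trace ((q (k + 1) - q (k + 2))ᵀ * ((q (k + 1) - q (k + 2)) - (q k - q (k + 1))))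
      + trace ((D (k + 1) - D (k + 2))ᵀ * P * ((D (k + 1) - D (k + 2)) - (D k - D (k + 1))))
      ≤ 0 := by
  set qv := q (k + 1) - q (k + 2)
  set qu := q k - q (k + 1)
  set Dv := D (k + 1) - D (k + 2)
  set Du := D k - D (k + 1)
  have hx : x (k + 1) - x (k + 2) = -(c • (Uᵀ * qv) + P * (Dv - Du)) := by
    rw [eq_neg_iff_add_eq_zero]
    calc _ = (x (k + 1) - r + c • (Uᵀ * q (k + 1)) + P * (D (k + 1) - D k))
          - (x (k + 2) - r + c • (Uᵀ * q (k + 2)) + P * (D (k + 2) - D (k + 1))) := by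
            simp only [qv, Dv, Du, Matrix.mul_sub, smul_sub]
            abel
      _ = 0 := by rw [hrec1 k, hrec1 (k + 1), sub_zero]
  have hUD : U * Dv = qv - qu := by
    have hnext : q (k + 2) = q (k + 1) + U * D (k + 2) := hrec2 (k + 1)
    simp only [qv, qu, Dv, Matrix.mul_sub]
    rw [hnext, hrec2 k]
    abel
  have hmono : 0 ≤ trace (Dvᵀ * (x (k + 1) - x (k + 2))) :=
    trace_transpose_mul_sub_nonneg_of_isSubgradAt (hsub (k + 1)) (hsub (k + 2))
  have hcoupling : trace (Dvᵀ * (Uᵀ * qv)) = trace (qvᵀ * (qv - qu)) := by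
    rw [← Matrix.mul_assoc, ← transpose_mul, hUD, ← trace_transpose, transpose_mul,
      transpose_transpose]
  rw [hx, Matrix.mul_neg, trace_neg, Matrix.mul_add, trace_add, Matrix.mul_smul, trace_smul,
    hcoupling, ← Matrix.mul_assoc] at hmono
  simp only [smul_eq_mul] at hmono
  linarith

theorem stmt_6_general (n p : ℕ)
    (U : Matrix (Fin (n - 1)) (Fin n) ℝ)
    (r : Matrix (Fin n) (Fin p) ℝ)
    (h : Fin n → (Fin p → ℝ) → ℝ)
    (c : ℝ) (hc : 0 < c)
    (β : Fin n → ℝ)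
    (hPSD : (Matrix.diagonal β - c • (Uᵀ * U)).PosSemidef)
    -- Mirror-P-EXTRA trajectory
    (x D : ℕ → Matrix (Fin n) (Fin p) ℝ)
    (q : ℕ → Matrix (Fin (n - 1)) (Fin p) ℝ)
    (hsub : ∀ k i, IsSubgradAt (h i) (D k i) (x k i))
    (hrec1 : ∀ k : ℕ,
      x (k + 1) - r + c • (Uᵀ * q (k + 1))
        + (Matrix.diagonal β - c • (Uᵀ * U)) * (D (k + 1) - D k) = 0)
    (hrec2 : ∀ k : ℕ, q (k + 1) = q k + U * D (k + 1)) :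
    ∀ k : ℕ,
      Msq c (Matrix.diagonal β - c • (Uᵀ * U)) (q (k + 1) - q (k + 2)) (D (k + 1) - D (k + 2)) ≤
        Msq c (Matrix.diagonal β - c • (Uᵀ * U)) (q k - q (k + 1)) (D k - D (k + 1)) := by
  intro k
  exact Msq_le_of_inner_sub_nonpos hc.le hPSD (inner_sub_nonpos_of_trajectory hsub hrec1 hrec2 k)

/-- Monotonicity of the successive differences of Mirror-P-EXTRA (Lemma 4). -/
theorem stmt_6 (n p : ℕ) (hn : 2 ≤ n) (hp : 1 ≤ p)
    (U : Matrix (Fin (n - 1)) (Fin n) ℝ)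
    (hU : ∀ v : Fin n → ℝ, U.mulVec v = 0 ↔ ∃ a : ℝ, v = fun _ => a)
    (r : Matrix (Fin n) (Fin p) ℝ)
    (h : Fin n → (Fin p → ℝ) → ℝ)
    (hconv : ∀ i, ConvexOn ℝ Set.univ (h i))
    (c : ℝ) (hc : 0 < c)
    (β : Fin n → ℝ) (hβ : ∀ i, 0 < β i)
    (hPSD : (Matrix.diagonal β - c • (Uᵀ * U)).PosSemidef)
    -- Mirror-P-EXTRA trajectory
    (x D : ℕ → Matrix (Fin n) (Fin p) ℝ)
    (q : ℕ → Matrix (Fin (n - 1)) (Fin p) ℝ)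
    (hsub : ∀ k i, IsSubgradAt (h i) (D k i) (x k i))
    (hrec1 : ∀ k : ℕ,
      x (k + 1) - r + c • (Uᵀ * q (k + 1))
        + (Matrix.diagonal β - c • (Uᵀ * U)) * (D (k + 1) - D k) = 0)
    (hrec2 : ∀ k : ℕ, q (k + 1) = q k + U * D (k + 1)) :
    ∀ k : ℕ,
      Msq c (Matrix.diagonal β - c • (Uᵀ * U)) (q (k + 1) - q (k + 2)) (D (k + 1) - D (k + 2)) ≤
        Msq c (Matrix.diagonal β - c • (Uᵀ * U)) (q k - q (k + 1)) (D k - D (k + 1)) :=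
  stmt_6_general n p U r h c hc β hPSD x D q hsub hrec1 hrec2
end
end

section
/- Suppose each f_i is μ_i-strongly convex with L_i-Lipschitz gradient, and let μ = min_i μ_i, L = max_i L_i. Let (x*, q*) satisfy x* − r + c Uᵀ q* = 0 and U ∇f(x*) = 0. Then there exists δ > 0 such that every smooth Mirror-P-EXTRA trajectory (x^k, q^k) satisfies, for all k ≥ 0, ‖z^{k+1} − z*‖_M² ≤ (1/(1+δ)) ‖z^k − z*‖_M², where z^k = (q^k, ∇f(x^k)) and z* = (q*, ∇f(x*)); consequently there exists a constant C ≥ 0 such that ‖x^{k+1} − x*‖_F² ≤ C·(1/(1+δ))^k for all k ≥ 0. -/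
/-!
Factor the preconditioner as `B - c𝕃 = GᵀG`, so that `‖z‖_M² = c‖q‖² + ‖G D‖²`. Pairing the error
equation `x^{k+1} - x* + c Uᵀ(q^{k+1} - q*) + GᵀG(∇f(x^{k+1}) - ∇f(x^k)) = 0` with
`∇f(x^{k+1}) - ∇f(x*)` and using `q^{k+1} - q^k = U(∇f(x^{k+1}) - ∇f(x*))` gives the energy identity
`‖z^k - z*‖_M² - ‖z^{k+1} - z*‖_M² = 2⟨x^{k+1} - x*, ∇f(x^{k+1}) - ∇f(x*)⟩ + c‖q^{k+1} - q^k‖²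
+ ‖G(∇f(x^{k+1}) - ∇f(x^k))‖²`, which strong convexity bounds below by
`2μ‖x^{k+1} - x*‖² + ‖G(∇f(x^{k+1}) - ∇f(x^k))‖²`. Conversely `Uᵀ` has a left inverse, so the same
error equation bounds `‖q^{k+1} - q*‖²` by these two quantities, and the Lipschitz bound controls
`‖G(∇f(x^{k+1}) - ∇f(x*))‖²` by `‖x^{k+1} - x*‖²`. Hence `‖z^{k+1} - z*‖_M²` is at most a fixed
multiple `K` of the decrease, i.e. the `M`-norm contracts by `1 / (1 + K⁻¹)`.
-/

open Matrix

noncomputable section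

/-- Squared Euclidean norm of a vector. -/
def enormSq {p : ℕ} (u : Fin p → ℝ) : ℝ := ∑ j, (u j) ^ 2

/-- The matrix whose `i`-th row is `∇fᵢ(xᵢ)`, given the gradient maps `g i`. -/
def gradMat {n p : ℕ} (g : Fin n → (Fin p → ℝ) → (Fin p → ℝ))
    (x : Matrix (Fin n) (Fin p) ℝ) : Matrix (Fin n) (Fin p) ℝ :=
  Matrix.of fun i => g i (x i)

namespace MirrorPExtra

variable {m n p : ℕ}

def frobInner (A B : Matrix (Fin m) (Fin p) ℝ) : ℝ := (Aᵀ * B).trace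

lemma frobInner_comm (A B : Matrix (Fin m) (Fin p) ℝ) : frobInner A B = frobInner B A := by
  rw [frobInner, ← trace_transpose, transpose_mul, transpose_transpose, frobInner]

lemma frobInner_mul_left (M : Matrix (Fin n) (Fin m) ℝ) (A : Matrix (Fin m) (Fin p) ℝ)
    (B : Matrix (Fin n) (Fin p) ℝ) : frobInner (M * A) B = frobInner A (Mᵀ * B) := by
  rw [frobInner, frobInner, transpose_mul, Matrix.mul_assoc]

lemma frobInner_add_left (A B C : Matrix (Fin m) (Fin p) ℝ) :
    frobInner (A + B) C = frobInner A C + frobInner B C := by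
  simp [frobInner, Matrix.add_mul]

lemma frobInner_sub_left (A B C : Matrix (Fin m) (Fin p) ℝ) :
    frobInner (A - B) C = frobInner A C - frobInner B C := by
  simp [frobInner, Matrix.sub_mul]

lemma frobInner_smul_left (t : ℝ) (A B : Matrix (Fin m) (Fin p) ℝ) :
    frobInner (t • A) B = t * frobInner A B := by
  simp [frobInner]

lemma frobInner_zero_left (B : Matrix (Fin m) (Fin p) ℝ) : frobInner 0 B = 0 := by
  simp [frobInner]

lemma frobInner_eq_sum_dotProduct (A B : Matrix (Fin m) (Fin p) ℝ) :
    frobInner A B = ∑ i, A i ⬝ᵥ B i := by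
  simp only [frobInner, trace, diag, mul_apply, transpose_apply, dotProduct]
  exact Finset.sum_comm

lemma frobSq_eq_sum_enormSq (A : Matrix (Fin m) (Fin p) ℝ) : frobSq A = ∑ i, enormSq (A i) :=
  rfl

lemma enormSq_eq_dotProduct (u : Fin p → ℝ) : enormSq u = u ⬝ᵥ u := by
  simp [enormSq, dotProduct, sq]

lemma frobSq_eq_frobInner (A : Matrix (Fin m) (Fin p) ℝ) : frobSq A = frobInner A A := by
  simp [frobSq_eq_sum_enormSq, enormSq_eq_dotProduct, frobInner_eq_sum_dotProduct]

lemma enormSq_nonneg (u : Fin p → ℝ) : 0 ≤ enormSq u := by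
  unfold enormSq; positivity

lemma frobSq_nonneg (A : Matrix (Fin m) (Fin p) ℝ) : 0 ≤ frobSq A := by
  unfold frobSq; positivity

lemma two_mul_frobInner_sub (A B : Matrix (Fin m) (Fin p) ℝ) :
    2 * frobInner (A - B) A = frobSq A - frobSq B + frobSq (A - B) := by
  simp only [frobSq_eq_frobInner, frobInner_sub_left, frobInner_comm _ (A - B)]
  rw [frobInner_comm B A]
  ring

lemma frobSq_smul (t : ℝ) (A : Matrix (Fin m) (Fin p) ℝ) : frobSq (t • A) = t ^ 2 * frobSq A := by
  simp only [frobSq_eq_frobInner, frobInner_smul_left, frobInner_comm _ (t • A)]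
  ring

lemma frobSq_neg (A : Matrix (Fin m) (Fin p) ℝ) : frobSq (-A) = frobSq A := by
  simpa using frobSq_smul (-1) A

lemma frobSq_add_le (A B : Matrix (Fin m) (Fin p) ℝ) :
    frobSq (A + B) ≤ 2 * frobSq A + 2 * frobSq B := by
  have h := frobSq_nonneg (A - B)
  simp only [frobSq_eq_frobInner, frobInner_add_left, frobInner_sub_left,
    frobInner_comm _ (A + B), frobInner_comm _ (A - B)] at h ⊢
  rw [frobInner_comm B A] at h ⊢
  linarith

section Frobenius

attribute [local instance] Matrix.frobeniusNormedAddCommGroup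

lemma frobSq_eq_norm_sq (A : Matrix (Fin m) (Fin p) ℝ) : frobSq A = ‖A‖ ^ 2 := by
  rw [frobenius_norm_def, ← Real.rpow_natCast, ← Real.rpow_mul (by positivity)]
  norm_num [frobSq]

lemma frobSq_mul_le (A : Matrix (Fin m) (Fin n) ℝ) (B : Matrix (Fin n) (Fin p) ℝ) :
    frobSq (A * B) ≤ frobSq A * frobSq B := by
  rw [frobSq_eq_norm_sq, frobSq_eq_norm_sq, frobSq_eq_norm_sq, ← mul_pow]
  exact pow_le_pow_left₀ (norm_nonneg _) (frobenius_norm_mul A B) 2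

lemma frobSq_transpose (A : Matrix (Fin m) (Fin p) ℝ) : frobSq Aᵀ = frobSq A := by
  rw [frobSq_eq_norm_sq, frobSq_eq_norm_sq, frobenius_norm_transpose]

end Frobenius

open scoped MatrixOrder in
lemma exists_eq_transpose_mul_self {P : Matrix (Fin n) (Fin n) ℝ} (hP : P.PosSemidef) :
    ∃ G : Matrix (Fin n) (Fin n) ℝ, P = Gᵀ * G := by
  obtain ⟨G, rfl⟩ := CStarAlgebra.nonneg_iff_eq_star_mul_self.mp hP.nonneg
  exact ⟨G, by simp [star_eq_conjTranspose]⟩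

lemma wSq_transpose_mul_self (G : Matrix (Fin m) (Fin n) ℝ) (D : Matrix (Fin n) (Fin p) ℝ) :
    wSq (Gᵀ * G) D = frobSq (G * D) := by
  rw [wSq, frobSq_eq_frobInner, frobInner, transpose_mul, Matrix.mul_assoc, Matrix.mul_assoc,
    Matrix.mul_assoc]

lemma Msq_transpose_mul_self (c : ℝ) (G : Matrix (Fin m) (Fin n) ℝ)
    (Q : Matrix (Fin (n - 1)) (Fin p) ℝ) (D : Matrix (Fin n) (Fin p) ℝ) :
    Msq c (Gᵀ * G) Q D = c * frobSq Q + frobSq (G * D) := by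
  rw [Msq, wSq_transpose_mul_self]

lemma Msq_transpose_mul_self_nonneg {c : ℝ} (hc : 0 ≤ c) (G : Matrix (Fin m) (Fin n) ℝ)
    (Q : Matrix (Fin (n - 1)) (Fin p) ℝ) (D : Matrix (Fin n) (Fin p) ℝ) :
    0 ≤ Msq c (Gᵀ * G) Q D := by
  rw [Msq_transpose_mul_self]
  exact add_nonneg (mul_nonneg hc (frobSq_nonneg Q)) (frobSq_nonneg _)

lemma exists_mul_eq_one_of_mulVec_eq_zero_iff (hn : 0 < n) {U : Matrix (Fin (n - 1)) (Fin n) ℝ}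
    (hU : ∀ v : Fin n → ℝ, U *ᵥ v = 0 ↔ ∃ a : ℝ, v = fun _ => a) :
    ∃ W : Matrix (Fin n) (Fin (n - 1)) ℝ, U * W = 1 := by
  refine mulVec_surjective_iff_exists_right_inverse.mp ?_
  have hker : LinearMap.ker U.mulVecLin = ℝ ∙ (fun _ => 1 : Fin n → ℝ) := by
    ext v
    simp only [LinearMap.mem_ker, mulVecLin_apply, hU, Submodule.mem_span_singleton]
    exact ⟨fun ⟨a, ha⟩ => ⟨a, by ext; simp [ha]⟩, fun ⟨a, ha⟩ => ⟨a, by ext; simp [← ha]⟩⟩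
  have hone : (fun _ => 1 : Fin n → ℝ) ≠ 0 := fun h => by simpa using congrFun h ⟨0, hn⟩
  have hrank := LinearMap.finrank_range_add_finrank_ker U.mulVecLin
  rw [hker, finrank_span_singleton hone, Module.finrank_fin_fun] at hrank
  change Function.Surjective U.mulVecLin
  rw [← LinearMap.range_eq_top]
  apply Submodule.eq_top_of_finrank_eq
  rw [Module.finrank_fin_fun]
  omega

lemma frobSq_le_mul_frobSq_transpose_mul {U : Matrix (Fin m) (Fin n) ℝ}
    {W : Matrix (Fin n) (Fin m) ℝ} (hW : U * W = 1) (Q : Matrix (Fin m) (Fin p) ℝ) :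
    frobSq Q ≤ frobSq W * frobSq (Uᵀ * Q) := by
  have hQ : Q = Wᵀ * (Uᵀ * Q) := by
    rw [← Matrix.mul_assoc, ← transpose_mul, hW, transpose_one, Matrix.one_mul]
  calc frobSq Q = frobSq (Wᵀ * (Uᵀ * Q)) := by rw [← hQ]
    _ ≤ frobSq W * frobSq (Uᵀ * Q) := by
      rw [← frobSq_transpose W]; exact frobSq_mul_le _ _

lemma mul_frobSq_le_frobInner_gradMat {g : Fin n → (Fin p → ℝ) → (Fin p → ℝ)} {μ : Fin n → ℝ}
    {μ₀ : ℝ} (hμ₀ : ∀ i, μ₀ ≤ μ i)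
    (hsc : ∀ i (u v : Fin p → ℝ), μ i * enormSq (u - v) ≤ (g i u - g i v) ⬝ᵥ (u - v))
    (x y : Matrix (Fin n) (Fin p) ℝ) :
    μ₀ * frobSq (x - y) ≤ frobInner (x - y) (gradMat g x - gradMat g y) := by
  rw [frobSq_eq_sum_enormSq, frobInner_eq_sum_dotProduct, Finset.mul_sum]
  gcongr with i
  calc μ₀ * enormSq (x i - y i) ≤ μ i * enormSq (x i - y i) :=
        mul_le_mul_of_nonneg_right (hμ₀ i) (enormSq_nonneg _)
    _ ≤ (g i (x i) - g i (y i)) ⬝ᵥ (x i - y i) := hsc i _ _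
    _ = (x - y) i ⬝ᵥ (gradMat g x - gradMat g y) i := dotProduct_comm _ _

lemma frobSq_gradMat_sub_le {g : Fin n → (Fin p → ℝ) → (Fin p → ℝ)} {L : Fin n → ℝ}
    {Λ : ℝ} (hΛ : ∀ i, L i ^ 2 ≤ Λ)
    (hlip : ∀ i (u v : Fin p → ℝ), enormSq (g i u - g i v) ≤ L i ^ 2 * enormSq (u - v))
    (x y : Matrix (Fin n) (Fin p) ℝ) :
    frobSq (gradMat g x - gradMat g y) ≤ Λ * frobSq (x - y) := by
  rw [frobSq_eq_sum_enormSq, frobSq_eq_sum_enormSq, Finset.mul_sum]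
  gcongr with i
  calc enormSq (g i (x i) - g i (y i)) ≤ L i ^ 2 * enormSq (x i - y i) := hlip i _ _
    _ ≤ Λ * enormSq (x i - y i) := mul_le_mul_of_nonneg_right (hΛ i) (enormSq_nonneg _)

section Step

variable {k : ℕ} {U : Matrix (Fin (n - 1)) (Fin n) ℝ} {W : Matrix (Fin n) (Fin (n - 1)) ℝ}
  {G : Matrix (Fin k) (Fin n) ℝ} {c μ₀ Λ : ℝ}
  {X D₀ D₁ : Matrix (Fin n) (Fin p) ℝ} {Q₀ Q₁ : Matrix (Fin (n - 1)) (Fin p) ℝ}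

lemma error_primal {r xs x' : Matrix (Fin n) (Fin p) ℝ} {qs q' : Matrix (Fin (n - 1)) (Fin p) ℝ}
    {P : Matrix (Fin n) (Fin n) ℝ} {ds d d' : Matrix (Fin n) (Fin p) ℝ}
    (h : x' - r + c • (Uᵀ * q') + P * (d' - d) = 0) (hs : xs - r + c • (Uᵀ * qs) = 0) :
    x' - xs + c • (Uᵀ * (q' - qs)) + P * ((d' - ds) - (d - ds)) = 0 :=
  calc _ = (x' - r + c • (Uᵀ * q') + P * (d' - d)) - (xs - r + c • (Uᵀ * qs)) := by
        simp only [Matrix.mul_sub, smul_sub]; abel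
    _ = 0 := by rw [h, hs, sub_zero]

lemma error_dual {q q' qs : Matrix (Fin (n - 1)) (Fin p) ℝ} {d' ds : Matrix (Fin n) (Fin p) ℝ}
    (h : q' = q + U * d') (hs : U * ds = 0) : (q' - qs) - (q - qs) = U * (d' - ds) := by
  rw [h, Matrix.mul_sub, hs]
  abel

lemma Msq_sub_Msq_eq (hx : X + c • (Uᵀ * Q₁) + (Gᵀ * G) * (D₁ - D₀) = 0)
    (hq : Q₁ - Q₀ = U * D₁) :
    Msq c (Gᵀ * G) Q₀ D₀ - Msq c (Gᵀ * G) Q₁ D₁ =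
      2 * frobInner X D₁ + c * frobSq (Q₁ - Q₀) + frobSq (G * (D₁ - D₀)) := by
  have h0 : frobInner (X + c • (Uᵀ * Q₁) + (Gᵀ * G) * (D₁ - D₀)) D₁ = 0 := by
    rw [hx, frobInner_zero_left]
  rw [frobInner_add_left, frobInner_add_left, frobInner_smul_left, frobInner_mul_left,
    transpose_transpose, ← hq, Matrix.mul_assoc, frobInner_mul_left, transpose_transpose,
    Matrix.mul_sub] at h0
  have hQ := two_mul_frobInner_sub Q₁ Q₀
  have hD := two_mul_frobInner_sub (G * D₁) (G * D₀)
  rw [frobInner_comm] at hQ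
  rw [Msq_transpose_mul_self, Msq_transpose_mul_self, Matrix.mul_sub]
  linear_combination -2 * h0 + c * hQ + hD

lemma Msq_le_of_error_eq (hc : 0 < c) (hW : U * W = 1)
    (hx : X + c • (Uᵀ * Q₁) + (Gᵀ * G) * (D₁ - D₀) = 0)
    (hlip : frobSq D₁ ≤ Λ * frobSq X) :
    Msq c (Gᵀ * G) Q₁ D₁ ≤ (2 * frobSq W / c + frobSq G * Λ) * frobSq X
      + 2 * frobSq W * frobSq G / c * frobSq (G * (D₁ - D₀)) := by
  have hUQ : c ^ 2 * frobSq (Uᵀ * Q₁) ≤ 2 * frobSq X + 2 * frobSq G * frobSq (G * (D₁ - D₀)) := by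
    have hneg : c • (Uᵀ * Q₁) = -(X + Gᵀ * (G * (D₁ - D₀))) := by
      rw [← Matrix.mul_assoc]; exact eq_neg_of_add_eq_zero_left (by rw [← hx]; abel)
    calc c ^ 2 * frobSq (Uᵀ * Q₁) = frobSq (X + Gᵀ * (G * (D₁ - D₀))) := by
          rw [← frobSq_smul, hneg, frobSq_neg]
      _ ≤ 2 * frobSq X + 2 * frobSq (Gᵀ * (G * (D₁ - D₀))) := frobSq_add_le _ _
      _ ≤ 2 * frobSq X + 2 * (frobSq G * frobSq (G * (D₁ - D₀))) := by
          gcongr; rw [← frobSq_transpose G]; exact frobSq_mul_le _ _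
      _ = _ := by ring
  have hQ : c * frobSq Q₁ ≤ frobSq W / c * (c ^ 2 * frobSq (Uᵀ * Q₁)) := by
    calc c * frobSq Q₁ ≤ c * (frobSq W * frobSq (Uᵀ * Q₁)) :=
          mul_le_mul_of_nonneg_left (frobSq_le_mul_frobSq_transpose_mul hW Q₁) hc.le
      _ = frobSq W / c * (c ^ 2 * frobSq (Uᵀ * Q₁)) := by field_simp
  have hD : frobSq (G * D₁) ≤ frobSq G * (Λ * frobSq X) :=
    (frobSq_mul_le G D₁).trans (mul_le_mul_of_nonneg_left hlip (frobSq_nonneg G))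
  have hWc : 0 ≤ frobSq W / c := div_nonneg (frobSq_nonneg W) hc.le
  rw [Msq_transpose_mul_self]
  calc c * frobSq Q₁ + frobSq (G * D₁)
      ≤ frobSq W / c * (2 * frobSq X + 2 * frobSq G * frobSq (G * (D₁ - D₀)))
        + frobSq G * (Λ * frobSq X) :=
        add_le_add (hQ.trans (mul_le_mul_of_nonneg_left hUQ hWc)) hD
    _ = _ := by ring

lemma exists_Msq_step (hμ₀ : 0 < μ₀) (hΛ : 0 ≤ Λ) (hc : 0 < c) (hW : U * W = 1) :
    ∃ K : ℝ, 0 < K ∧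
      ∀ (X D₀ D₁ : Matrix (Fin n) (Fin p) ℝ) (Q₀ Q₁ : Matrix (Fin (n - 1)) (Fin p) ℝ),
      X + c • (Uᵀ * Q₁) + (Gᵀ * G) * (D₁ - D₀) = 0 → Q₁ - Q₀ = U * D₁ →
      μ₀ * frobSq X ≤ frobInner X D₁ → frobSq D₁ ≤ Λ * frobSq X →
      2 * μ₀ * frobSq X ≤ Msq c (Gᵀ * G) Q₀ D₀ - Msq c (Gᵀ * G) Q₁ D₁ ∧
        Msq c (Gᵀ * G) Q₁ D₁ ≤ K * (Msq c (Gᵀ * G) Q₀ D₀ - Msq c (Gᵀ * G) Q₁ D₁) := by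
  set A₁ := 2 * frobSq W / c + frobSq G * Λ
  set A₂ := 2 * frobSq W * frobSq G / c
  have hA₁ : 0 ≤ A₁ := by have := frobSq_nonneg W; have := frobSq_nonneg G; positivity
  have hA₂ : 0 ≤ A₂ := by have := frobSq_nonneg W; have := frobSq_nonneg G; positivity
  refine ⟨A₁ / (2 * μ₀) + A₂ + 1, by positivity, fun X D₀ D₁ Q₀ Q₁ hx hq hmono hlip => ?_⟩
  set E := frobSq (G * (D₁ - D₀))
  have hX := frobSq_nonneg X
  have hE := frobSq_nonneg (G * (D₁ - D₀))
  have hdesc : 2 * μ₀ * frobSq X + E ≤ Msq c (Gᵀ * G) Q₀ D₀ - Msq c (Gᵀ * G) Q₁ D₁ := by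
    rw [Msq_sub_Msq_eq hx hq]
    linarith [mul_nonneg hc.le (frobSq_nonneg (Q₁ - Q₀))]
  refine ⟨by linarith, ?_⟩
  calc Msq c (Gᵀ * G) Q₁ D₁ ≤ A₁ * frobSq X + A₂ * E := Msq_le_of_error_eq hc hW hx hlip
    _ ≤ (A₁ / (2 * μ₀) + A₂ + 1) * (2 * μ₀ * frobSq X + E) := by
      have hsplit : (A₁ / (2 * μ₀) + A₂ + 1) * (2 * μ₀ * frobSq X + E)
          = A₁ * frobSq X + A₂ * E + (A₁ / (2 * μ₀) * E + (2 * μ₀ * (A₂ + 1) * frobSq X + E)) := by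
        field_simp; ring
      rw [hsplit]
      have : 0 ≤ A₁ / (2 * μ₀) * E + (2 * μ₀ * (A₂ + 1) * frobSq X + E) := by positivity
      linarith
    _ ≤ _ := mul_le_mul_of_nonneg_left hdesc (by positivity)

end Step

lemma linear_rate_of_lyapunov {a b : ℕ → ℝ} {K m : ℝ} (hK : 0 < K) (hm : 0 < m)
    (h : ∀ k, m * b k ≤ a k - a (k + 1) ∧ a (k + 1) ≤ K * (a k - a (k + 1)))
    (ha : ∀ k, 0 ≤ a k) :
    (∀ k, a (k + 1) ≤ 1 / (1 + K⁻¹) * a k) ∧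
      ∃ C, 0 ≤ C ∧ ∀ k, b k ≤ C * (1 / (1 + K⁻¹)) ^ k := by
  have hρ : 1 / (1 + K⁻¹) = K / (K + 1) := by field_simp
  have hcontr : ∀ k, a (k + 1) ≤ 1 / (1 + K⁻¹) * a k := fun k => by
    rw [hρ, div_mul_eq_mul_div, le_div_iff₀ (by positivity)]
    linarith [(h k).2]
  refine ⟨hcontr, a 0 / m, div_nonneg (ha 0) hm.le, fun k => ?_⟩
  have hgeom := le_geom (by positivity) k fun j _ => hcontr j
  rw [div_mul_eq_mul_div, le_div_iff₀ hm]
  linarith [(h k).1, ha (k + 1)]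

end MirrorPExtra

open MirrorPExtra

theorem stmt_8_general (n p : ℕ) (hn : 2 ≤ n)
    (U : Matrix (Fin (n - 1)) (Fin n) ℝ)
    (hU : ∀ v : Fin n → ℝ, U.mulVec v = 0 ↔ ∃ a : ℝ, v = fun _ => a)
    (r : Matrix (Fin n) (Fin p) ℝ)
    (g : Fin n → (Fin p → ℝ) → (Fin p → ℝ))
    (μ L : Fin n → ℝ) (hμpos : ∀ i, 0 < μ i)
    -- each `fᵢ` is `μᵢ`-strongly convex
    (hsc : ∀ i (u v : Fin p → ℝ), μ i * enormSq (u - v) ≤ (g i u - g i v) ⬝ᵥ (u - v))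
    -- each `∇fᵢ` is `Lᵢ`-Lipschitz
    (hlip : ∀ i (u v : Fin p → ℝ), enormSq (g i u - g i v) ≤ (L i) ^ 2 * enormSq (u - v))
    (c : ℝ) (hc : 0 < c)
    (β : Fin n → ℝ)
    (hPSD : (Matrix.diagonal β - c • (Uᵀ * U)).PosSemidef)
    -- the optimal pair `(x*, q*)`
    (xs : Matrix (Fin n) (Fin p) ℝ) (qs : Matrix (Fin (n - 1)) (Fin p) ℝ)
    (hopt1 : xs - r + c • (Uᵀ * qs) = 0)
    (hopt2 : U * gradMat g xs = 0) :
    ∃ δ : ℝ, 0 < δ ∧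
      ∀ (x : ℕ → Matrix (Fin n) (Fin p) ℝ) (q : ℕ → Matrix (Fin (n - 1)) (Fin p) ℝ),
        (∀ k : ℕ,
          x (k + 1) - r + c • (Uᵀ * q (k + 1))
            + (Matrix.diagonal β - c • (Uᵀ * U)) * (gradMat g (x (k + 1)) - gradMat g (x k))
              = 0) →
        (∀ k : ℕ, q (k + 1) = q k + U * gradMat g (x (k + 1))) →
        ((∀ k : ℕ,
            Msq c (Matrix.diagonal β - c • (Uᵀ * U)) (q (k + 1) - qs)
                (gradMat g (x (k + 1)) - gradMat g xs) ≤
              (1 / (1 + δ)) *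
                Msq c (Matrix.diagonal β - c • (Uᵀ * U)) (q k - qs)
                  (gradMat g (x k) - gradMat g xs)) ∧
          ∃ C : ℝ, 0 ≤ C ∧
            ∀ k : ℕ, frobSq (x (k + 1) - xs) ≤ C * (1 / (1 + δ)) ^ k) := by
  have : Nonempty (Fin n) := ⟨⟨0, by omega⟩⟩
  obtain ⟨W, hW⟩ := exists_mul_eq_one_of_mulVec_eq_zero_iff (by omega) hU
  obtain ⟨G, hG⟩ := exists_eq_transpose_mul_self hPSD
  obtain ⟨iμ, hiμ⟩ := Finite.exists_min μ
  obtain ⟨iL, hiL⟩ := Finite.exists_max fun i => L i ^ 2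
  have hmono := mul_frobSq_le_frobInner_gradMat hiμ hsc
  have hlipF := frobSq_gradMat_sub_le hiL hlip
  obtain ⟨K, hK, hstep⟩ := exists_Msq_step (p := p) (G := G) (hμpos iμ) (sq_nonneg (L iL)) hc hW
  refine ⟨K⁻¹, inv_pos.mpr hK, fun x q hx hq => ?_⟩
  rw [hG] at hx ⊢
  have hdecay := fun k => hstep _ _ _ _ _ (error_primal (hx k) hopt1) (error_dual (hq k) hopt2)
    (hmono _ _) (hlipF _ _)
  exact linear_rate_of_lyapunov hK (mul_pos two_pos (hμpos iμ)) hdecay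
    fun k => Msq_transpose_mul_self_nonneg hc.le G _ _

/-- Linear (geometric) rate of Mirror-P-EXTRA under strong convexity and
gradient Lipschitz continuity (Theorem 3). -/
theorem stmt_8 (n p : ℕ) (hn : 2 ≤ n) (hp : 1 ≤ p)
    (U : Matrix (Fin (n - 1)) (Fin n) ℝ)
    (hU : ∀ v : Fin n → ℝ, U.mulVec v = 0 ↔ ∃ a : ℝ, v = fun _ => a)
    (r : Matrix (Fin n) (Fin p) ℝ)
    (f : Fin n → (Fin p → ℝ) → ℝ)
    (g : Fin n → (Fin p → ℝ) → (Fin p → ℝ))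
    -- each `fᵢ` is differentiable with gradient `g i`
    (hgrad : ∀ i (u : Fin p → ℝ),
      HasGradientAt (fun v : EuclideanSpace ℝ (Fin p) => f i ((WithLp.equiv 2 (Fin p → ℝ)) v))
        ((WithLp.equiv 2 (Fin p → ℝ)).symm (g i u))
        ((WithLp.equiv 2 (Fin p → ℝ)).symm u))
    (μ L : Fin n → ℝ) (hμpos : ∀ i, 0 < μ i) (hLpos : ∀ i, 0 < L i)
    -- each `fᵢ` is `μᵢ`-strongly convex
    (hsc : ∀ i (u v : Fin p → ℝ), μ i * enormSq (u - v) ≤ (g i u - g i v) ⬝ᵥ (u - v))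
    -- each `∇fᵢ` is `Lᵢ`-Lipschitz
    (hlip : ∀ i (u v : Fin p → ℝ), enormSq (g i u - g i v) ≤ (L i) ^ 2 * enormSq (u - v))
    (c : ℝ) (hc : 0 < c)
    (β : Fin n → ℝ) (hβ : ∀ i, 0 < β i)
    (hPSD : (Matrix.diagonal β - c • (Uᵀ * U)).PosSemidef)
    -- the optimal pair `(x*, q*)`
    (xs : Matrix (Fin n) (Fin p) ℝ) (qs : Matrix (Fin (n - 1)) (Fin p) ℝ)
    (hopt1 : xs - r + c • (Uᵀ * qs) = 0)
    (hopt2 : U * gradMat g xs = 0) :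
    ∃ δ : ℝ, 0 < δ ∧
      ∀ (x : ℕ → Matrix (Fin n) (Fin p) ℝ) (q : ℕ → Matrix (Fin (n - 1)) (Fin p) ℝ),
        (∀ k : ℕ,
          x (k + 1) - r + c • (Uᵀ * q (k + 1))
            + (Matrix.diagonal β - c • (Uᵀ * U)) * (gradMat g (x (k + 1)) - gradMat g (x k))
              = 0) →
        (∀ k : ℕ, q (k + 1) = q k + U * gradMat g (x (k + 1))) →
        ((∀ k : ℕ,
            Msq c (Matrix.diagonal β - c • (Uᵀ * U)) (q (k + 1) - qs)
                (gradMat g (x (k + 1)) - gradMat g xs) ≤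
              (1 / (1 + δ)) *
                Msq c (Matrix.diagonal β - c • (Uᵀ * U)) (q k - qs)
                  (gradMat g (x k) - gradMat g xs)) ∧
          ∃ C : ℝ, 0 ≤ C ∧
            ∀ k : ℕ, frobSq (x (k + 1) - xs) ≤ C * (1 / (1 + δ)) ^ k) :=
  stmt_8_general n p hn U hU r g μ L hμpos hsc hlip c hc β hPSD xs qs hopt1 hopt2
end
end

section
/- Let a, b > 0, and let sequences u^k, v^k ∈ ℝ^{n×p} (k ≥ 0) and a point (u*, v*) ∈ ℝ^{n×p} × ℝ^{n×p} satisfy, for all k ≥ 0, b‖u^{k+1} − u*‖_F² + a‖v^{k+1} − v*‖_F² ≤ b‖u^k − u*‖_F² − b‖u^k − u^{k+1}‖_F² − b‖v^k − v*‖_F² + b‖v^k − v^{k+1}‖_F². Then for any ρ > 0 and any t ∈ (0,1) such that a(1−t)/ρ − b ≤ a·t and a(1−t)/(1+ρ) − b > 0, the sequence { b‖u^k − u*‖_F² + a·t‖v^k − v*‖_F² } is monotonically non-increasing in k, and Σ_{k=0}^∞ [ b‖u^k − u^{k+1}‖_F² + (a(1−t)/(1+ρ) − b)‖v^k − v^{k+1}‖_F²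 ] < ∞. -/
open Matrix

noncomputable section

/-!
Young's inequality with weight `ρ` bounds `‖v^k - v^{k+1}‖²` by `(1 + 1/ρ)‖v^k - v*‖²` plus
`(1 + ρ)‖v^{k+1} - v*‖²`. Scaling it by `a(1-t)/(1+ρ)` and adding it to the recursion, the
conditions on `ρ` and `t` show that the energy `b‖u^k - u*‖² + a t‖v^k - v*‖²` drops at each
step by at least the `k`-th term of the series, which is nonnegative; the series is then
bounded by the initial energy.
-/

open scoped Matrix.Norms.Frobenius

theorem frobSq_eq_norm_sq {m p : ℕ} (A : Matrix (Fin m) (Fin p) ℝ) : frobSq A = ‖A‖ ^ 2 := by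
  rw [frobenius_norm_def, ← Real.rpow_natCast, ← Real.rpow_mul (by positivity)]
  norm_num [frobSq]

theorem add_sq_le_weighted_sq {ρ : ℝ} (hρ : 0 < ρ) (x y : ℝ) :
    (x + y) ^ 2 ≤ (1 + 1 / ρ) * x ^ 2 + (1 + ρ) * y ^ 2 := by
  have hgap : (1 + 1 / ρ) * x ^ 2 + (1 + ρ) * y ^ 2 - (x + y) ^ 2 = (x - ρ * y) ^ 2 / ρ := by
    field_simp
    ring
  nlinarith [div_nonneg (sq_nonneg (x - ρ * y)) hρ.le]

theorem norm_sub_sq_le_weighted_sq {E : Type*} [SeminormedAddCommGroup E] {ρ : ℝ} (hρ : 0 < ρ)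
    (x y z : E) : ‖x - y‖ ^ 2 ≤ (1 + 1 / ρ) * ‖x - z‖ ^ 2 + (1 + ρ) * ‖y - z‖ ^ 2 :=
  calc ‖x - y‖ ^ 2 ≤ (‖x - z‖ + ‖y - z‖) ^ 2 := by
        gcongr
        simpa only [norm_sub_rev z y] using norm_sub_le_norm_sub_add_norm_sub x z y
    _ ≤ _ := add_sq_le_weighted_sq hρ _ _

theorem summable_of_add_le_of_nonneg {E c : ℕ → ℝ} (hE : ∀ k, 0 ≤ E k) (hc : ∀ k, 0 ≤ c k)
    (h : ∀ k, E (k + 1) + c k ≤ E k) : Summable c := by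
  have htelescope : ∀ N, ∑ k ∈ Finset.range N, c k + E N ≤ E 0 := by
    intro N
    induction N with
    | zero => simp
    | succ N ih =>
      rw [Finset.sum_range_succ]
      linarith [h N]
  exact summable_of_sum_range_le hc fun N => by linarith [htelescope N, hE N]

theorem energy_add_gap_le {E : Type*} [SeminormedAddCommGroup E] {a b ρ t : ℝ} (hρ : 0 < ρ)
    (hc : 0 ≤ a * (1 - t) / (1 + ρ)) (hcond : a * (1 - t) / ρ - b ≤ a * t)
    (u u' v v' us vs : E)
    (h : b * ‖u' - us‖ ^ 2 + a * ‖v' - vs‖ ^ 2 ≤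
      b * ‖u - us‖ ^ 2 - b * ‖u - u'‖ ^ 2 - b * ‖v - vs‖ ^ 2 + b * ‖v - v'‖ ^ 2) :
    b * ‖u' - us‖ ^ 2 + a * t * ‖v' - vs‖ ^ 2 +
        (b * ‖u - u'‖ ^ 2 + (a * (1 - t) / (1 + ρ) - b) * ‖v - v'‖ ^ 2) ≤
      b * ‖u - us‖ ^ 2 + a * t * ‖v - vs‖ ^ 2 := by
  have hyoung : a * (1 - t) / (1 + ρ) * ‖v - v'‖ ^ 2 ≤
      a * (1 - t) / ρ * ‖v - vs‖ ^ 2 + a * (1 - t) * ‖v' - vs‖ ^ 2 :=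
    calc a * (1 - t) / (1 + ρ) * ‖v - v'‖ ^ 2
        ≤ a * (1 - t) / (1 + ρ) * ((1 + 1 / ρ) * ‖v - vs‖ ^ 2 + (1 + ρ) * ‖v' - vs‖ ^ 2) :=
          mul_le_mul_of_nonneg_left (norm_sub_sq_le_weighted_sq hρ v v' vs) hc
      _ = a * (1 - t) / ρ * ‖v - vs‖ ^ 2 + a * (1 - t) * ‖v' - vs‖ ^ 2 := by
          field_simp
          ring
  nlinarith [mul_le_mul_of_nonneg_right hcond (sq_nonneg ‖v - vs‖)]

theorem stmt_11_general (n p : ℕ) (a b : ℝ) (ha : 0 < a) (hb : 0 < b)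
    (u v : ℕ → Matrix (Fin n) (Fin p) ℝ)
    (us vs : Matrix (Fin n) (Fin p) ℝ)
    (hrec : ∀ k : ℕ,
      b * frobSq (u (k + 1) - us) + a * frobSq (v (k + 1) - vs) ≤
        b * frobSq (u k - us) - b * frobSq (u k - u (k + 1))
          - b * frobSq (v k - vs) + b * frobSq (v k - v (k + 1)))
    (ρ t : ℝ) (hρ : 0 < ρ) (ht0 : 0 < t)
    (hcond1 : a * (1 - t) / ρ - b ≤ a * t)
    (hcond2 : a * (1 - t) / (1 + ρ) - b > 0) :
    (∀ k : ℕ,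
      b * frobSq (u (k + 1) - us) + a * t * frobSq (v (k + 1) - vs) ≤
        b * frobSq (u k - us) + a * t * frobSq (v k - vs)) ∧
    Summable (fun k : ℕ =>
      b * frobSq (u k - u (k + 1)) +
        (a * (1 - t) / (1 + ρ) - b) * frobSq (v k - v (k + 1))) := by
  simp only [frobSq_eq_norm_sq] at hrec ⊢
  have hstep := fun k ↦ energy_add_gap_le (t := t) hρ (by linarith) hcond1
    (u k) (u (k + 1)) (v k) (v (k + 1)) us vs (hrec k)
  have hgap : ∀ k, 0 ≤ b * ‖u k - u (k + 1)‖ ^ 2 +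
      (a * (1 - t) / (1 + ρ) - b) * ‖v k - v (k + 1)‖ ^ 2 :=
    fun k ↦ add_nonneg (by positivity) (mul_nonneg hcond2.le (sq_nonneg _))
  exact ⟨fun k ↦ by linarith [hstep k, hgap k],
    summable_of_add_le_of_nonneg
      (E := fun k ↦ b * ‖u k - us‖ ^ 2 + a * t * ‖v k - vs‖ ^ 2) (fun k ↦ by positivity) hgap hstep⟩

/-- Lemma on contraction of coupled sequences (Lemma 5 / `contraction_lemma`). -/
theorem stmt_11 (n p : ℕ) (hn : 1 ≤ n) (hp : 1 ≤ p) (a b : ℝ) (ha : 0 < a) (hb : 0 < b)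
    (u v : ℕ → Matrix (Fin n) (Fin p) ℝ)
    (us vs : Matrix (Fin n) (Fin p) ℝ)
    (hrec : ∀ k : ℕ,
      b * frobSq (u (k + 1) - us) + a * frobSq (v (k + 1) - vs) ≤
        b * frobSq (u k - us) - b * frobSq (u k - u (k + 1))
          - b * frobSq (v k - vs) + b * frobSq (v k - v (k + 1)))
    (ρ t : ℝ) (hρ : 0 < ρ) (ht0 : 0 < t) (ht1 : t < 1)
    (hcond1 : a * (1 - t) / ρ - b ≤ a * t)
    (hcond2 : a * (1 - t) / (1 + ρ) - b > 0) :
    (∀ k : ℕ,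
      b * frobSq (u (k + 1) - us) + a * t * frobSq (v (k + 1) - vs) ≤
        b * frobSq (u k - us) + a * t * frobSq (v k - vs)) ∧
    Summable (fun k : ℕ =>
      b * frobSq (u k - u (k + 1)) +
        (a * (1 - t) / (1 + ρ) - b) * frobSq (v k - v (k + 1))) :=
  stmt_11_general n p a b ha hb u v us vs hrec ρ t hρ ht0 hcond1 hcond2
end
end
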